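/- arXiv:2112.08851 — 5 statements merged into one kernel-verified Lean document; each statement's English description precedes it below -/
import Mathlib

section
/- Suppose the input distribution μ has no atoms. Then for every real number 𝒦 ∈ [0, C] there exists a deterministic (measurable) set-valued classifier S̃ with S̃(x) ⊆ {k : η_k(x) = λ_𝒦} for every x and ℐ(S̃) = 𝒦 − ℐ(𝒮_𝒦^+); consequently the classifier 𝒮_𝒦^*(x) = 𝒮_𝒦^+(x) ∪ S̃(x) is deterministic and satisfies ℐ(𝒮_𝒦^*) = 𝒦. -/
open MeasureTheory Finset

/-- Error rate of a set-valued classifier: `ℰ(S) = ∫ (1 − ∑_{k∈S(x)} η_k(x)) dμ(x)`. -/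
noncomputable def errRate {𝒳 : Type*} [MeasurableSpace 𝒳] (μ : Measure 𝒳) {C : ℕ}
    (η : 𝒳 → Fin C → ℝ) (S : 𝒳 → Finset (Fin C)) : ℝ :=
  ∫ x, (1 - ∑ k ∈ S x, η x k) ∂μ

/-- Average set size of a set-valued classifier: `ℐ(S) = ∫ |S(x)| dμ(x)`. -/
noncomputable def avgSize {𝒳 : Type*} [MeasurableSpace 𝒳] (μ : Measure 𝒳) {C : ℕ}
    (S : 𝒳 → Finset (Fin C)) : ℝ :=
  ∫ x, ((S x).card : ℝ) ∂μ

/-- `G_η(λ) = ∑_{k=1}^C μ{x : η_k(x) > λ}`. -/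
noncomputable def Gfun {𝒳 : Type*} [MeasurableSpace 𝒳] (μ : Measure 𝒳) {C : ℕ}
    (η : 𝒳 → Fin C → ℝ) (lam : ℝ) : ℝ :=
  ∑ k : Fin C, (μ {x | lam < η x k}).toReal

/-- `λ_𝒦 = min {λ ∈ [0,1] : G_η(λ) ≤ 𝒦}` (as an infimum). -/
noncomputable def lamThresh {𝒳 : Type*} [MeasurableSpace 𝒳] (μ : Measure 𝒳) {C : ℕ}
    (η : 𝒳 → Fin C → ℝ) (K : ℝ) : ℝ :=
  sInf {lam : ℝ | lam ∈ Set.Icc (0 : ℝ) 1 ∧ Gfun μ η lam ≤ K}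

/-- `𝒮_𝒦^+(x) = {k : η_k(x) > λ_𝒦}`. -/
noncomputable def Splus {𝒳 : Type*} [MeasurableSpace 𝒳] (μ : Measure 𝒳) {C : ℕ}
    (η : 𝒳 → Fin C → ℝ) (K : ℝ) : 𝒳 → Finset (Fin C) :=
  fun x => Finset.univ.filter (fun k => lamThresh μ η K < η x k)

section AuxLemmas

open Filter Topology
open scoped ENNReal

variable {𝒳 : Type*} [MeasurableSpace 𝒳]

/-- From the atomless hypothesis: arbitrarily small positive-measure subsets. -/
lemma aux_small (μ : Measure 𝒳) [IsProbabilityMeasure μ]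
    (hatomless : ∀ s : Set 𝒳, MeasurableSet s → 0 < μ s →
      ∃ t, t ⊆ s ∧ MeasurableSet t ∧ 0 < μ t ∧ μ t < μ s)
    {s : Set 𝒳} (hs : MeasurableSet s) (hpos : 0 < μ s) {ε : ℝ≥0∞} (hε : 0 < ε) :
    ∃ t, t ⊆ s ∧ MeasurableSet t ∧ 0 < μ t ∧ μ t ≤ ε := by
  have key : ∀ n : ℕ, ∃ t, t ⊆ s ∧ MeasurableSet t ∧ 0 < μ t ∧ μ t ≤ 2⁻¹ ^ n := by
    intro n
    induction n with
    | zero =>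
      exact ⟨s, subset_rfl, hs, hpos, by simpa using (prob_le_one (μ := μ) (s := s))⟩
    | succ n ih =>
      obtain ⟨t, hts, htm, htpos, htle⟩ := ih
      obtain ⟨u, hut, hum, hupos, hult⟩ := hatomless t htm htpos
      have hdiff : μ (t \ u) = μ t - μ u := measure_diff hut hum.nullMeasurableSet
        ((measure_lt_top μ u).ne)
      have hdpos : 0 < μ (t \ u) := by
        rw [hdiff]
        exact tsub_pos_of_lt hult
      have hadd : μ u + μ (t \ u) = μ t := by
        rw [hdiff]
        exact add_tsub_cancel_of_le hult.le
      rcases le_total (μ u) (μ (t \ u)) with h | h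
      · refine ⟨u, hut.trans hts, hum, hupos, ?_⟩
        have : μ u + μ u ≤ μ t := by
          calc μ u + μ u ≤ μ u + μ (t \ u) := by gcongr
          _ = μ t := hadd
        have h2 : μ u ≤ μ t / 2 := by
          rw [ENNReal.le_div_iff_mul_le (by simp) (by simp), mul_two]
          exact this
        calc μ u ≤ μ t / 2 := h2
          _ ≤ 2⁻¹ ^ n / 2 := by gcongr
          _ = 2⁻¹ ^ (n + 1) := by
            rw [pow_succ, div_eq_mul_inv]
      · refine ⟨t \ u, (Set.diff_subset).trans hts, htm.diff hum, hdpos, ?_⟩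
        have : μ (t \ u) + μ (t \ u) ≤ μ t := by
          calc μ (t \ u) + μ (t \ u) ≤ μ u + μ (t \ u) := by gcongr
          _ = μ t := hadd
        have h2 : μ (t \ u) ≤ μ t / 2 := by
          rw [ENNReal.le_div_iff_mul_le (by simp) (by simp), mul_two]
          exact this
        calc μ (t \ u) ≤ μ t / 2 := h2
          _ ≤ 2⁻¹ ^ n / 2 := by gcongr
          _ = 2⁻¹ ^ (n + 1) := by
            rw [pow_succ, div_eq_mul_inv]
  obtain ⟨n, hn⟩ := ENNReal.exists_inv_two_pow_lt hε.ne'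
  obtain ⟨t, h1, h2, h3, h4⟩ := key n
  exact ⟨t, h1, h2, h3, h4.trans hn.le⟩

/-- Sierpiński: an atomless probability measure takes all intermediate values on subsets. -/
lemma aux_sierpinski (μ : Measure 𝒳) [IsProbabilityMeasure μ]
    (hatomless : ∀ s : Set 𝒳, MeasurableSet s → 0 < μ s →
      ∃ t, t ⊆ s ∧ MeasurableSet t ∧ 0 < μ t ∧ μ t < μ s)
    {s : Set 𝒳} (hs : MeasurableSet s) {r : ℝ≥0∞} (hr : r ≤ μ s) :
    ∃ t, t ⊆ s ∧ MeasurableSet t ∧ μ t = r := by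
  classical
  set Good : Set 𝒳 → Prop := fun u => u ⊆ s ∧ MeasurableSet u ∧ μ u ≤ r with hGood
  set Cand : Set 𝒳 → Set (Set 𝒳) :=
    fun u => {v | v ⊆ s \ u ∧ MeasurableSet v ∧ μ u + μ v ≤ r} with hCand
  set δ : Set 𝒳 → ℝ≥0∞ := fun u => ⨆ v ∈ Cand u, μ v with hδ
  have hδfin : ∀ u, δ u ≤ 1 := by
    intro u
    refine iSup₂_le fun v _ => ?_
    exact prob_le_one
  have hstep : ∀ u : Set 𝒳, Good u →
      ∃ v, v ∈ Cand u ∧ δ u ≤ 2 * μ v := by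
    intro u hu
    by_cases h0 : δ u = 0
    · refine ⟨∅, ⟨Set.empty_subset _, MeasurableSet.empty, by simpa using hu.2.2⟩, by simp [h0]⟩
    · have hlt : δ u / 2 < δ u :=
        ENNReal.half_lt_self h0 (lt_of_le_of_lt (hδfin u) (by norm_num)).ne
      rw [hδ] at hlt
      obtain ⟨v, hvlt⟩ := lt_iSup_iff.mp hlt
      have hvC : v ∈ Cand u := by
        by_contra h
        simp [h] at hvlt
      rw [iSup_pos hvC] at hvlt
      refine ⟨v, hvC, ?_⟩
      have h2 := mul_le_mul_right hvlt.le 2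
      rwa [ENNReal.mul_div_cancel (by norm_num) (by norm_num)] at h2
  choose! V hVmem hVle using hstep
  set u : ℕ → Set 𝒳 := fun n => Nat.rec (∅ : Set 𝒳) (fun _ w => w ∪ V w) n with hu
  have hu0 : u 0 = ∅ := rfl
  have husucc : ∀ n, u (n + 1) = u n ∪ V (u n) := fun n => rfl
  have hGoodu : ∀ n, Good (u n) := by
    intro n
    induction n with
    | zero => exact ⟨by simp [hu0], by simp [hu0], by simp [hu0]⟩
    | succ n ih =>
      obtain ⟨hsub, hmeas, hle⟩ := hVmem (u n) ih
      refine ⟨?_, ih.2.1.union hmeas, ?_⟩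
      · rw [husucc]
        exact Set.union_subset ih.1 (hsub.trans Set.diff_subset)
      · rw [husucc]
        exact le_trans (measure_union_le _ _) hle
  have hdisj : ∀ n, Disjoint (u n) (V (u n)) := fun n =>
    ((Set.subset_diff.mp (hVmem (u n) (hGoodu n)).1).2).symm
  have haddu : ∀ n, μ (u (n + 1)) = μ (u n) + μ (V (u n)) := by
    intro n
    rw [husucc, measure_union (hdisj n) (hVmem (u n) (hGoodu n)).2.1]
  have hmono : Monotone u := monotone_nat_of_le_succ fun n => by
    rw [husucc]; exact Set.subset_union_left
  set U : Set 𝒳 := ⋃ n, u n with hU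
  have hUmeas : MeasurableSet U := MeasurableSet.iUnion fun n => (hGoodu n).2.1
  have hUsub : U ⊆ s := Set.iUnion_subset fun n => (hGoodu n).1
  have htend : Tendsto (fun n => μ (u n)) atTop (𝓝 (μ U)) :=
    tendsto_measure_iUnion_atTop hmono
  have hUle : μ U ≤ r := le_of_tendsto' htend fun n => (hGoodu n).2.2
  refine ⟨U, hUsub, hUmeas, ?_⟩
  by_contra hne
  have hUlt : μ U < r := lt_of_le_of_ne hUle hne
  have hεpos : 0 < r - μ U := tsub_pos_of_lt hUlt
  have hdiffpos : 0 < μ (s \ U) := by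
    have h1 : r - μ U ≤ μ s - μ U := by gcongr
    have h2 : μ s - μ U ≤ μ (s \ U) := le_measure_diff
    exact lt_of_lt_of_le hεpos (h1.trans h2)
  obtain ⟨t, hts, htm, htpos, htle⟩ := aux_small μ hatomless (hs.diff hUmeas) hdiffpos hεpos
  have htCand : ∀ n, t ∈ Cand (u n) := by
    intro n
    refine ⟨hts.trans ?_, htm, ?_⟩
    · exact Set.diff_subset_diff_right (Set.subset_iUnion u n)
    · calc μ (u n) + μ t ≤ μ U + (r - μ U) := by
            gcongr
            exact Set.subset_iUnion u n
        _ = r := add_tsub_cancel_of_le hUlt.le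
  have hδlb : ∀ n, μ t ≤ δ (u n) := by
    intro n
    exact le_iSup₂ (f := fun v (_ : v ∈ Cand (u n)) => μ v) t (htCand n)
  have hVlb : ∀ n, μ t ≤ 2 * μ (V (u n)) := fun n =>
    (hδlb n).trans (hVle (u n) (hGoodu n))
  have hgrow : ∀ n : ℕ, (n : ℝ≥0∞) * μ t ≤ 2 * μ (u n) := by
    intro n
    induction n with
    | zero => simp
    | succ n ih =>
      have : ((n : ℝ≥0∞) + 1) * μ t = (n : ℝ≥0∞) * μ t + μ t := by ring
      rw [Nat.cast_succ, this, haddu n, mul_add]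
      exact add_le_add ih (hVlb n)
  have htfin : μ t ≠ ∞ := (measure_lt_top μ t).ne
  obtain ⟨n, hn⟩ := ENNReal.exists_nat_gt (show 2 * (μ t)⁻¹ ≠ ∞ from
    ENNReal.mul_ne_top (by norm_num) (ENNReal.inv_ne_top.mpr htpos.ne'))
  have hbound : (n : ℝ≥0∞) * μ t ≤ 2 := by
    refine (hgrow n).trans ?_
    have : μ (u n) ≤ 1 := prob_le_one
    calc 2 * μ (u n) ≤ 2 * 1 := by gcongr
      _ = 2 := by norm_num
  have : 2 * (μ t)⁻¹ * μ t < (n : ℝ≥0∞) * μ t :=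
    (ENNReal.mul_lt_mul_iff_left htpos.ne' htfin).mpr hn
  rw [mul_assoc, ENNReal.inv_mul_cancel htpos.ne' htfin, mul_one] at this
  exact absurd (this.trans_le hbound) (lt_irrefl 2)

/-- `avgSize` via level sets. -/
lemma aux_avgSize (μ : Measure 𝒳) [IsFiniteMeasure μ] {C : ℕ} (S : 𝒳 → Finset (Fin C))
    (hS : ∀ k, MeasurableSet {x | k ∈ S x}) :
    avgSize μ S = ∑ k : Fin C, (μ {x | k ∈ S x}).toReal := by
  have hcard : ∀ x, ((S x).card : ℝ)
      = ∑ k : Fin C, Set.indicator {y | k ∈ S y} (fun _ => (1 : ℝ)) x := by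
    intro x
    simp only [Set.indicator_apply, Set.mem_setOf_eq]
    rw [Finset.sum_ite_mem]
    simp [Finset.univ_inter]
  have hint : ∀ k : Fin C, Integrable (Set.indicator {y | k ∈ S y} (fun _ => (1 : ℝ))) μ := by
    intro k
    rw [integrable_indicator_iff (hS k)]
    exact (integrable_const 1).integrableOn
  unfold avgSize
  calc ∫ x, ((S x).card : ℝ) ∂μ
      = ∫ x, ∑ k : Fin C, Set.indicator {y | k ∈ S y} (fun _ => (1 : ℝ)) x ∂μ := by
        simp_rw [hcard]
    _ = ∑ k : Fin C, ∫ x, Set.indicator {y | k ∈ S y} (fun _ => (1 : ℝ)) x ∂μ :=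
        integral_finset_sum _ fun k _ => hint k
    _ = ∑ k : Fin C, (μ {x | k ∈ S x}).toReal := by
        refine Finset.sum_congr rfl fun k _ => ?_
        rw [integral_indicator_const (1 : ℝ) (hS k), smul_eq_mul, mul_one, measureReal_def]

variable (μ : Measure 𝒳) [IsProbabilityMeasure μ] {C : ℕ} (η : 𝒳 → Fin C → ℝ)

omit [IsProbabilityMeasure μ] in
lemma aux_mem_upper (hη0 : ∀ x k, 0 ≤ η x k) (hη1 : ∀ x, ∑ k, η x k = 1)
    {K : ℝ} (hK : 0 ≤ K) :
    (1 : ℝ) ∈ {lam : ℝ | lam ∈ Set.Icc (0 : ℝ) 1 ∧ Gfun μ η lam ≤ K} := by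
  have hle1 : ∀ x k, η x k ≤ 1 := by
    intro x k
    rw [← hη1 x]
    exact Finset.single_le_sum (fun i _ => hη0 x i) (Finset.mem_univ k)
  refine ⟨⟨zero_le_one, le_rfl⟩, ?_⟩
  have : ∀ k : Fin C, {x | (1 : ℝ) < η x k} = ∅ := by
    intro k
    ext x
    simp only [Set.mem_setOf_eq, Set.mem_empty_iff_false, iff_false, not_lt]
    exact hle1 x k
  unfold Gfun
  simp only [this]
  simpa using hK

lemma aux_G_le (hη : ∀ k, Measurable fun x => η x k)
    (hη0 : ∀ x k, 0 ≤ η x k) (hη1 : ∀ x, ∑ k, η x k = 1)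
    {K : ℝ} (hK : 0 ≤ K) :
    Gfun μ η (lamThresh μ η K) ≤ K := by
  set A := {lam : ℝ | lam ∈ Set.Icc (0 : ℝ) 1 ∧ Gfun μ η lam ≤ K} with hA
  have hAne : A.Nonempty := ⟨1, aux_mem_upper μ η hη0 hη1 hK⟩
  have hAbdd : BddBelow A := ⟨0, fun x hx => hx.1.1⟩
  set lam := lamThresh μ η K with hlam
  have hlamInf : lam = sInf A := rfl
  obtain ⟨u, hu_anti, hu_tend, hu_mem⟩ := exists_seq_tendsto_sInf hAne hAbdd
  rw [← hlamInf] at hu_tend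
  have hlam_le : ∀ n, lam ≤ u n := fun n => csInf_le hAbdd (hu_mem n)
  have hGt : Tendsto (fun n => Gfun μ η (u n)) atTop (𝓝 (Gfun μ η lam)) := by
    unfold Gfun
    refine tendsto_finset_sum _ fun k _ => ?_
    have hmonoset : Monotone fun n => {x | u n < η x k} := by
      intro n m hnm x hx
      exact lt_of_le_of_lt (hu_anti hnm) hx
    have hUeq : (⋃ n, {x | u n < η x k}) = {x | lam < η x k} := by
      ext x
      simp only [Set.mem_iUnion, Set.mem_setOf_eq]
      constructor
      · rintro ⟨n, hn⟩
        exact lt_of_le_of_lt (hlam_le n) hn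
      · intro hx
        exact (hu_tend.eventually_lt_const hx).exists
    have h1 := tendsto_measure_iUnion_atTop (μ := μ) hmonoset
    rw [hUeq] at h1
    exact (ENNReal.tendsto_toReal (measure_ne_top μ _)).comp h1
  exact le_of_tendsto hGt (Eventually.of_forall fun n => (hu_mem n).2)

lemma aux_K_le (hη : ∀ k, Measurable fun x => η x k)
    (hη0 : ∀ x k, 0 ≤ η x k) (hη1 : ∀ x, ∑ k, η x k = 1)
    {K : ℝ} (hK : 0 ≤ K) (hKC : K ≤ (C : ℝ)) :
    K ≤ ∑ k : Fin C, (μ {x | lamThresh μ η K ≤ η x k}).toReal := by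
  set A := {lam : ℝ | lam ∈ Set.Icc (0 : ℝ) 1 ∧ Gfun μ η lam ≤ K} with hA
  have hAne : A.Nonempty := ⟨1, aux_mem_upper μ η hη0 hη1 hK⟩
  have hAbdd : BddBelow A := ⟨0, fun x hx => hx.1.1⟩
  set lam := lamThresh μ η K with hlam
  have hlam0 : 0 ≤ lam := le_csInf hAne fun x hx => hx.1.1
  have hlam1 : lam ≤ 1 := csInf_le hAbdd (aux_mem_upper μ η hη0 hη1 hK)
  rcases eq_or_lt_of_le hlam0 with h0 | h0
  · have : ∀ k : Fin C, {x | lam ≤ η x k} = Set.univ := by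
      intro k
      ext x
      simp only [Set.mem_setOf_eq, Set.mem_univ, iff_true]
      rw [← h0]
      exact hη0 x k
    simp only [this, measure_univ, ENNReal.toReal_one, Finset.sum_const, Finset.card_univ,
      Fintype.card_fin, nsmul_eq_mul, mul_one]
    exact hKC
  · set v : ℕ → ℝ := fun n => lam - lam / (n + 1) with hv
    have hv_lt : ∀ n, v n < lam := by
      intro n
      have : 0 < lam / (n + 1) := by positivity
      simpa [hv] using sub_lt_self lam this
    have hv_nonneg : ∀ n, 0 ≤ v n := by
      intro n
      have : lam / (n + 1) ≤ lam := by
        rw [div_le_iff₀ (by positivity)]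
        nlinarith [hlam0, (Nat.cast_nonneg n : (0:ℝ) ≤ n)]
      simpa [hv] using sub_nonneg.mpr this
    have hv_mono : Monotone v := by
      intro n m hnm
      have : lam / (m + 1) ≤ lam / (n + 1) := by
        gcongr
      simpa [hv] using sub_le_sub_left this lam
    have hv_tend : Tendsto v atTop (𝓝 lam) := by
      have h1 : Tendsto (fun n : ℕ => lam / (n + 1)) atTop (𝓝 0) := by
        have := tendsto_one_div_add_atTop_nhds_zero_nat.const_mul lam
        simpa [div_eq_mul_inv, mul_comm] using this
      have := tendsto_const_nhds (x := lam) (f := atTop (α := ℕ)) |>.sub h1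
      simpa using this
    have hKlt : ∀ n, K < Gfun μ η (v n) := by
      intro n
      by_contra h
      push_neg at h
      have : v n ∈ A := ⟨⟨hv_nonneg n, (hv_lt n).le.trans hlam1⟩, h⟩
      exact absurd (csInf_le hAbdd this) (not_le.mpr (hv_lt n))
    have hGt : Tendsto (fun n => Gfun μ η (v n)) atTop
        (𝓝 (∑ k : Fin C, (μ {x | lam ≤ η x k}).toReal)) := by
      unfold Gfun
      refine tendsto_finset_sum _ fun k _ => ?_
      have hanti : Antitone fun n => {x | v n < η x k} := by
        intro n m hnm x hx
        exact lt_of_le_of_lt (hv_mono hnm) hx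
      have hIeq : (⋂ n, {x | v n < η x k}) = {x | lam ≤ η x k} := by
        ext x
        simp only [Set.mem_iInter, Set.mem_setOf_eq]
        constructor
        · intro hx
          exact le_of_tendsto hv_tend (Eventually.of_forall fun n => (hx n).le)
        · intro hx n
          exact lt_of_lt_of_le (hv_lt n) hx
      have h1 := tendsto_measure_iInter_atTop (μ := μ)
        (fun n => (measurableSet_lt measurable_const (hη k)).nullMeasurableSet)
        hanti ⟨0, measure_ne_top μ _⟩
      rw [hIeq] at h1
      exact (ENNReal.tendsto_toReal (measure_ne_top μ _)).comp h1
    exact ge_of_tendsto hGt (Eventually.of_forall fun n => (hKlt n).le)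

end AuxLemmas

/-- Prop. 1: if `μ` has no atoms (every measurable set of positive measure
contains a measurable subset of strictly smaller positive measure), then for every real
`𝒦 ∈ [0, C]` there is a deterministic measurable tie-breaking classifier `T` with
`T(x) ⊆ {k : η_k(x) = λ_𝒦}`, `ℐ(T) = 𝒦 − ℐ(𝒮_𝒦^+)`, and hence
`ℐ(𝒮_𝒦^*) = ℐ(𝒮_𝒦^+ ∪ T) = 𝒦`. -/
theorem stmt_0 {𝒳 : Type*} [MeasurableSpace 𝒳] (μ : Measure 𝒳) [IsProbabilityMeasure μ]
    (hatomless : ∀ s : Set 𝒳, MeasurableSet s → 0 < μ s →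
      ∃ t, t ⊆ s ∧ MeasurableSet t ∧ 0 < μ t ∧ μ t < μ s)
    {C : ℕ} (hC : 0 < C) (η : 𝒳 → Fin C → ℝ)
    (hη : ∀ k, Measurable fun x => η x k)
    (hη0 : ∀ x k, 0 ≤ η x k) (hη1 : ∀ x, ∑ k, η x k = 1)
    (𝒦 : ℝ) (h𝒦 : 𝒦 ∈ Set.Icc (0 : ℝ) (C : ℝ)) :
    ∃ T : 𝒳 → Finset (Fin C),
      (∀ k, MeasurableSet {x | k ∈ T x}) ∧
      (∀ x, ∀ k ∈ T x, η x k = lamThresh μ η 𝒦) ∧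
      avgSize μ T = 𝒦 - avgSize μ (Splus μ η 𝒦) ∧
      avgSize μ (fun x => Splus μ η 𝒦 x ∪ T x) = 𝒦 := by
  classical
  obtain ⟨hK0, hKC⟩ := h𝒦
  set lam := lamThresh μ η 𝒦 with hlam
  have hmeasgt : ∀ k : Fin C, MeasurableSet {x | lam < η x k} :=
    fun k => measurableSet_lt measurable_const (hη k)
  have hmeaseq : ∀ k : Fin C, MeasurableSet {x | η x k = lam} :=
    fun k => (hη k) (measurableSet_singleton lam)
  have hGle : Gfun μ η lam ≤ 𝒦 := aux_G_le μ η hη hη0 hη1 hK0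
  have hKle : 𝒦 ≤ ∑ k : Fin C, (μ {x | lam ≤ η x k}).toReal :=
    aux_K_le μ η hη hη0 hη1 hK0 hKC
  have hsplit : ∀ k : Fin C, (μ {x | lam ≤ η x k}).toReal
      = (μ {x | lam < η x k}).toReal + (μ {x | η x k = lam}).toReal := by
    intro k
    have hset : {x | lam ≤ η x k} = {x | lam < η x k} ∪ {x | η x k = lam} := by
      ext x
      simp only [Set.mem_setOf_eq, Set.mem_union]
      constructor
      · intro h
        rcases lt_or_eq_of_le h with h | h
        exacts [Or.inl h, Or.inr h.symm]
      · rintro (h | h)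
        exacts [h.le, h.ge]
    have hdisj : Disjoint {x | lam < η x k} {x | η x k = lam} := by
      rw [Set.disjoint_left]
      intro x hx hx2
      exact absurd hx2 (ne_of_gt hx)
    rw [hset, measure_union hdisj (hmeaseq k),
      ENNReal.toReal_add (measure_ne_top μ _) (measure_ne_top μ _)]
  set M := ∑ k : Fin C, (μ {x | η x k = lam}).toReal with hM
  have hsumM : ∑ k : Fin C, (μ {x | lam ≤ η x k}).toReal = Gfun μ η lam + M := by
    rw [hM]
    unfold Gfun
    rw [← Finset.sum_add_distrib]
    exact Finset.sum_congr rfl fun k _ => hsplit k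
  have hKle2 : 𝒦 ≤ Gfun μ η lam + M := hsumM ▸ hKle
  set δ := 𝒦 - Gfun μ η lam with hδdef
  have hδ0 : 0 ≤ δ := by simp only [hδdef]; linarith
  have hδM : δ ≤ M := by simp only [hδdef]; linarith
  -- the stacking construction
  set m : ℕ → ℝ := fun j => if h : j < C then (μ {x | η x ⟨j, h⟩ = lam}).toReal else 0 with hm
  set F : ℕ → ℝ := fun n => ∑ j ∈ Finset.range n, m j with hF
  set a : Fin C → ℝ := fun k => min (F (k.1 + 1)) δ - min (F k.1) δ with ha
  have hm_nonneg : ∀ j, 0 ≤ m j := by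
    intro j
    simp only [hm]
    split
    · exact ENNReal.toReal_nonneg
    · exact le_rfl
  have hmk : ∀ k : Fin C, m k.1 = (μ {x | η x k = lam}).toReal := by
    intro k
    simp only [hm, k.2, dif_pos, Fin.eta]
  have hFsucc : ∀ n, F (n + 1) = F n + m n := fun n => Finset.sum_range_succ m n
  have hFC : F C = M := by
    have : F C = ∑ j ∈ Finset.range C, m j := rfl
    rw [this, hM, ← Fin.sum_univ_eq_sum_range m C]
    exact Finset.sum_congr rfl fun k _ => hmk k
  have hsum_a : ∑ k : Fin C, a k = δ := by
    have h1 : ∑ k : Fin C, a k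
        = ∑ j ∈ Finset.range C, (min (F (j + 1)) δ - min (F j) δ) := by
      simp only [ha]
      exact Fin.sum_univ_eq_sum_range (fun j => min (F (j + 1)) δ - min (F j) δ) C
    rw [h1, Finset.sum_range_sub (fun n => min (F n) δ)]
    have hF0 : F 0 = 0 := by simp [hF]
    rw [hF0, hFC, min_eq_right hδM, min_eq_left hδ0, sub_zero]
  have h_a_nonneg : ∀ k, 0 ≤ a k := by
    intro k
    have : F k.1 ≤ F (k.1 + 1) := by
      rw [hFsucc]
      linarith [hm_nonneg k.1]
    simp only [ha]
    have := min_le_min_right δ this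
    linarith [min_le_min this (le_refl δ)]
  have h_a_le : ∀ k : Fin C, a k ≤ m k.1 := by
    intro k
    simp only [ha]
    rcases le_total δ (F k.1) with h | h
    · rw [min_eq_right h, min_eq_right (by rw [hFsucc]; linarith [hm_nonneg k.1])]
      simpa using hm_nonneg k.1
    · rw [min_eq_left h]
      have h2 : min (F (k.1 + 1)) δ ≤ F k.1 + m k.1 := by
        rw [← hFsucc]
        exact min_le_left _ _
      linarith
  -- Sierpiński choices inside each tie set
  have hchoice : ∀ k : Fin C, ∃ t, t ⊆ {x | η x k = lam} ∧ MeasurableSet t ∧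
      μ t = ENNReal.ofReal (a k) := by
    intro k
    refine aux_sierpinski μ hatomless (hmeaseq k) ?_
    have h1 : a k ≤ (μ {x | η x k = lam}).toReal := (h_a_le k).trans_eq (hmk k)
    exact ENNReal.ofReal_le_of_le_toReal h1
  choose Aset hAsub hAmeas hAeq using hchoice
  have hAtoReal : ∀ k, (μ (Aset k)).toReal = a k := by
    intro k
    rw [hAeq k, ENNReal.toReal_ofReal (h_a_nonneg k)]
  refine ⟨fun x => Finset.univ.filter (fun k => x ∈ Aset k), ?_, ?_, ?_, ?_⟩
  · intro k
    have : {x | k ∈ Finset.univ.filter (fun k => x ∈ Aset k)} = Aset k := by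
      ext x
      simp
    rw [this]
    exact hAmeas k
  · intro x k hk
    simp only [Finset.mem_filter, Finset.mem_univ, true_and] at hk
    exact hAsub k hk
  · -- avgSize T = 𝒦 - avgSize Splus
    have hTlevel : ∀ k : Fin C,
        {x | k ∈ Finset.univ.filter (fun k => x ∈ Aset k)} = Aset k := by
      intro k
      ext x
      simp
    have hSlevel : ∀ k : Fin C, {x | k ∈ Splus μ η 𝒦 x} = {x | lam < η x k} := by
      intro k
      ext x
      simp [Splus, ← hlam]
    have hT : avgSize μ (fun x => Finset.univ.filter (fun k => x ∈ Aset k)) = δ := by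
      rw [aux_avgSize μ _ (fun k => by rw [hTlevel k]; exact hAmeas k)]
      rw [← hsum_a]
      exact Finset.sum_congr rfl fun k _ => by rw [hTlevel k, hAtoReal k]
    have hSp : avgSize μ (Splus μ η 𝒦) = Gfun μ η lam := by
      rw [aux_avgSize μ _ (fun k => by rw [hSlevel k]; exact hmeasgt k)]
      unfold Gfun
      exact Finset.sum_congr rfl fun k _ => by rw [hSlevel k]
    rw [hT, hSp]
  · -- avgSize of the union
    have hUlevel : ∀ k : Fin C,
        {x | k ∈ Splus μ η 𝒦 x ∪ Finset.univ.filter (fun k => x ∈ Aset k)}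
          = {x | lam < η x k} ∪ Aset k := by
      intro k
      ext x
      simp [Splus, ← hlam, Set.mem_union]
    have hdisj2 : ∀ k : Fin C, Disjoint {x | lam < η x k} (Aset k) := by
      intro k
      rw [Set.disjoint_left]
      intro x hx hx2
      exact absurd (hAsub k hx2) (ne_of_gt hx)
    rw [aux_avgSize μ _ (fun k => by rw [hUlevel k]; exact (hmeasgt k).union (hAmeas k))]
    have : ∀ k : Fin C, (μ ({x | lam < η x k} ∪ Aset k)).toReal
        = (μ {x | lam < η x k}).toReal + (μ (Aset k)).toReal := by
      intro k
      rw [measure_union (hdisj2 k) (hAmeas k),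
        ENNReal.toReal_add (measure_ne_top μ _) (measure_ne_top μ _)]
    calc ∑ k : Fin C, (μ {x | k ∈ Splus μ η 𝒦 x ∪ Finset.univ.filter (fun k => x ∈ Aset k)}).toReal
        = ∑ k : Fin C, ((μ {x | lam < η x k}).toReal + (μ (Aset k)).toReal) := by
          refine Finset.sum_congr rfl fun k _ => ?_
          rw [hUlevel k, this k]
      _ = Gfun μ η lam + δ := by
          rw [Finset.sum_add_distrib]
          congr 1
          rw [← hsum_a]
          exact Finset.sum_congr rfl fun k _ => hAtoReal k
      _ = 𝒦 := by simp only [hδdef]; ring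
end

section
/- For any deterministic set-valued classifier 𝒮_𝒦 with average size exactly 𝒦 (i.e., ℐ(𝒮_𝒦) = 𝒦), its excess error over the optimal average-𝒦 classifier 𝒮_𝒦^* equals ℰ(𝒮_𝒦) − ℰ(𝒮_𝒦^*) = ∑_{k=1}^C ∫ |η_k(x) − λ_𝒦| · 1{k ∈ 𝒮_𝒦(x) △ 𝒮_𝒦^*(x)} dμ(x), where △ denotes symmetric difference of sets. In particular this quantity is nonnegative, so 𝒮_𝒦^* has the lowest error rate among all deterministic classifiers with average size 𝒦. -/
open MeasureTheory Finset

lemma intble_of_bound {𝒳 : Type*} [MeasurableSpace 𝒳] (μ : Measure 𝒳) [IsFiniteMeasure μ]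
    (f : 𝒳 → ℝ) (B : ℝ) (hm : Measurable f) (hb : ∀ x, |f x| ≤ B) : Integrable f μ :=
  (integrable_const B).mono' hm.aestronglyMeasurable (ae_of_all _ hb)

/-- Prop. 2: for any deterministic classifier `S` with `ℐ(S) = 𝒦`,
`ℰ(S) − ℰ(𝒮_𝒦^*) = ∑_k ∫ |η_k(x) − λ_𝒦| 1{k ∈ S(x) △ 𝒮_𝒦^*(x)} dμ(x)`, hence
`𝒮_𝒦^*` has the lowest error rate among classifiers of average size `𝒦`. -/
theorem stmt_1 {𝒳 : Type*} [MeasurableSpace 𝒳] (μ : Measure 𝒳) [IsProbabilityMeasure μ]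
    {C : ℕ} (η : 𝒳 → Fin C → ℝ)
    (hη : ∀ k, Measurable fun x => η x k)
    (hη0 : ∀ x k, 0 ≤ η x k) (hη1 : ∀ x, ∑ k, η x k = 1)
    (𝒦 : ℝ)
    -- the tie-breaking part `𝒮̃_𝒦^=` of the optimal classifier, assumed to exist
    (T : 𝒳 → Finset (Fin C))
    (hT_meas : ∀ k, MeasurableSet {x | k ∈ T x})
    (hT_tie : ∀ x, ∀ k ∈ T x, η x k = lamThresh μ η 𝒦)
    (hT_size : avgSize μ T = 𝒦 - avgSize μ (Splus μ η 𝒦))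
    -- an arbitrary deterministic classifier with average size exactly 𝒦
    (S : 𝒳 → Finset (Fin C))
    (hS_meas : ∀ k, MeasurableSet {x | k ∈ S x})
    (hS_size : avgSize μ S = 𝒦) :
    errRate μ η S - errRate μ η (fun x => Splus μ η 𝒦 x ∪ T x)
        = ∑ k : Fin C, ∫ x, |η x k - lamThresh μ η 𝒦|
            * (if k ∈ symmDiff (S x) (Splus μ η 𝒦 x ∪ T x) then (1 : ℝ) else 0) ∂μ
      ∧ errRate μ η (fun x => Splus μ η 𝒦 x ∪ T x) ≤ errRate μ η S := by
  classical
  set lam := lamThresh μ η 𝒦 with hlamdef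
  -- basic bounds on η
  have hub : ∀ x k, η x k ≤ 1 := by
    intro x k
    calc η x k ≤ ∑ j, η x j :=
          Finset.single_le_sum (fun j _ => hη0 x j) (Finset.mem_univ k)
      _ = 1 := hη1 x
  have hmemPlus : ∀ x k, k ∈ Splus μ η 𝒦 x ↔ lam < η x k := by
    intro x k; simp [Splus, hlamdef]
  have hge : ∀ x k, k ∈ Splus μ η 𝒦 x ∪ T x → lam ≤ η x k := by
    intro x k hk
    rcases Finset.mem_union.1 hk with h | h
    · exact le_of_lt ((hmemPlus x k).1 h)
    · exact (hT_tie x k h).ge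
  have hle : ∀ x k, k ∉ Splus μ η 𝒦 x ∪ T x → η x k ≤ lam := by
    intro x k hk
    by_contra h
    push_neg at h
    exact hk (Finset.mem_union_left _ ((hmemPlus x k).2 h))
  have hdisj : ∀ x, Disjoint (Splus μ η 𝒦 x) (T x) := by
    intro x
    refine Finset.disjoint_left.2 fun k hk hk' => ?_
    exact (ne_of_gt ((hmemPlus x k).1 hk)) (hT_tie x k hk')
  -- measurable sets for memberships
  have hPlus_meas : ∀ k, MeasurableSet {x | k ∈ Splus μ η 𝒦 x} := by
    intro k
    have : {x | k ∈ Splus μ η 𝒦 x} = {x | lam < η x k} := by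
      ext x; simp [hmemPlus]
    rw [this]
    exact measurableSet_lt measurable_const (hη k)
  have hU_meas : ∀ k, MeasurableSet {x | k ∈ Splus μ η 𝒦 x ∪ T x} := by
    intro k
    have : {x | k ∈ Splus μ η 𝒦 x ∪ T x}
        = {x | k ∈ Splus μ η 𝒦 x} ∪ {x | k ∈ T x} := by
      ext x; simp [Finset.mem_union]
    rw [this]
    exact (hPlus_meas k).union (hT_meas k)
  have hSD_meas : ∀ k, MeasurableSet {x | k ∈ symmDiff (S x) (Splus μ η 𝒦 x ∪ T x)} := by
    intro k
    have : {x | k ∈ symmDiff (S x) (Splus μ η 𝒦 x ∪ T x)}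
        = ({x | k ∈ S x} \ {x | k ∈ Splus μ η 𝒦 x ∪ T x})
          ∪ ({x | k ∈ Splus μ η 𝒦 x ∪ T x} \ {x | k ∈ S x}) := by
      ext x
      simp only [Set.mem_setOf_eq, Set.mem_union, Set.mem_diff, Finset.mem_symmDiff]
    rw [this]
    exact ((hS_meas k).diff (hU_meas k)).union ((hU_meas k).diff (hS_meas k))
  -- the families of integrands
  set a : Fin C → 𝒳 → ℝ := fun k x => if k ∈ S x then η x k else 0 with hadef
  set b : Fin C → 𝒳 → ℝ := fun k x => if k ∈ Splus μ η 𝒦 x ∪ T x then η x k else 0 with hbdef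
  set cS : Fin C → 𝒳 → ℝ := fun k x => if k ∈ S x then (1:ℝ) else 0 with hcSdef
  set cU : Fin C → 𝒳 → ℝ := fun k x => if k ∈ Splus μ η 𝒦 x ∪ T x then (1:ℝ) else 0 with hcUdef
  set d : Fin C → 𝒳 → ℝ := fun k x => |η x k - lam|
      * (if k ∈ symmDiff (S x) (Splus μ η 𝒦 x ∪ T x) then (1:ℝ) else 0) with hddef
  -- integrability
  have ha_int : ∀ k, Integrable (a k) μ := by
    intro k
    refine intble_of_bound μ _ 1 (Measurable.ite (hS_meas k) (hη k) measurable_const) ?_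
    intro x
    simp only [hadef]
    split <;> simp [abs_of_nonneg (hη0 x k), hub x k]
  have hb_int : ∀ k, Integrable (b k) μ := by
    intro k
    refine intble_of_bound μ _ 1 (Measurable.ite (hU_meas k) (hη k) measurable_const) ?_
    intro x
    simp only [hbdef]
    split <;> simp [abs_of_nonneg (hη0 x k), hub x k]
  have hcS_int : ∀ k, Integrable (cS k) μ := by
    intro k
    refine intble_of_bound μ _ 1 (Measurable.ite (hS_meas k) measurable_const measurable_const) ?_
    intro x
    simp only [hcSdef]
    split <;> simp
  have hcU_int : ∀ k, Integrable (cU k) μ := by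
    intro k
    refine intble_of_bound μ _ 1 (Measurable.ite (hU_meas k) measurable_const measurable_const) ?_
    intro x
    simp only [hcUdef]
    split <;> simp
  have hd_int : ∀ k, Integrable (d k) μ := by
    intro k
    refine intble_of_bound μ _ (1 + |lam|)
      (((hη k).sub measurable_const).abs.mul
        (Measurable.ite (hSD_meas k) measurable_const measurable_const)) ?_
    intro x
    simp only [hddef]
    have h1 : |η x k - lam| ≤ 1 + |lam| := by
      calc |η x k - lam| ≤ |η x k| + |lam| := abs_sub _ _
        _ ≤ 1 + |lam| := by
            have := abs_of_nonneg (hη0 x k)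
            have := hub x k
            linarith [abs_of_nonneg (hη0 x k)]
    split
    · rw [mul_one, abs_abs]; exact h1
    · rw [mul_zero, abs_zero]
      positivity
  -- pointwise key identity
  have key : ∀ k x, b k x - a k x = d k x + lam * (cU k x - cS k x) := by
    intro k x
    by_cases h1 : k ∈ S x <;> by_cases h2 : k ∈ Splus μ η 𝒦 x ∪ T x
    · have h3 : k ∉ symmDiff (S x) (Splus μ η 𝒦 x ∪ T x) := by
        simp [Finset.mem_symmDiff, h1, h2]
      simp only [hadef, hbdef, hcSdef, hcUdef, hddef, if_pos h1, if_pos h2, if_neg h3]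
      ring
    · have h3 : k ∈ symmDiff (S x) (Splus μ η 𝒦 x ∪ T x) :=
        Finset.mem_symmDiff.2 (Or.inl ⟨h1, h2⟩)
      have h4 : η x k ≤ lam := hle x k h2
      simp only [hadef, hbdef, hcSdef, hcUdef, hddef, if_pos h1, if_neg h2, if_pos h3]
      rw [abs_of_nonpos (by linarith)]
      ring
    · have h3 : k ∈ symmDiff (S x) (Splus μ η 𝒦 x ∪ T x) :=
        Finset.mem_symmDiff.2 (Or.inr ⟨h2, h1⟩)
      have h4 : lam ≤ η x k := hge x k h2
      simp only [hadef, hbdef, hcSdef, hcUdef, hddef, if_neg h1, if_pos h2, if_pos h3]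
      rw [abs_of_nonneg (by linarith)]
      ring
    · have h3 : k ∉ symmDiff (S x) (Splus μ η 𝒦 x ∪ T x) := by
        simp [Finset.mem_symmDiff, h1, h2]
      simp only [hadef, hbdef, hcSdef, hcUdef, hddef, if_neg h1, if_neg h2, if_neg h3]
      ring
  -- error rates in terms of sums of integrals
  have errS : errRate μ η S = 1 - ∑ k, ∫ x, a k x ∂μ := by
    unfold errRate
    calc ∫ x, (1 - ∑ k ∈ S x, η x k) ∂μ
        = ∫ x, (1 - ∑ k : Fin C, a k x) ∂μ := by
          refine integral_congr_ae (ae_of_all _ fun x => ?_)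
          congr 1
          simp only [hadef]
          rw [Finset.sum_ite_mem, Finset.univ_inter]
      _ = (∫ _x, (1:ℝ) ∂μ) - ∫ x, ∑ k : Fin C, a k x ∂μ :=
          integral_sub (integrable_const 1) (integrable_finset_sum _ fun k _ => ha_int k)
      _ = 1 - ∑ k, ∫ x, a k x ∂μ := by
          rw [integral_const, probReal_univ, integral_finset_sum _ fun k _ => ha_int k]
          simp
  have errU : errRate μ η (fun x => Splus μ η 𝒦 x ∪ T x) = 1 - ∑ k, ∫ x, b k x ∂μ := by
    unfold errRate
    calc ∫ x, (1 - ∑ k ∈ Splus μ η 𝒦 x ∪ T x, η x k) ∂μ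
        = ∫ x, (1 - ∑ k : Fin C, b k x) ∂μ := by
          refine integral_congr_ae (ae_of_all _ fun x => ?_)
          congr 1
          simp only [hbdef]
          rw [Finset.sum_ite_mem, Finset.univ_inter]
      _ = (∫ _x, (1:ℝ) ∂μ) - ∫ x, ∑ k : Fin C, b k x ∂μ :=
          integral_sub (integrable_const 1) (integrable_finset_sum _ fun k _ => hb_int k)
      _ = 1 - ∑ k, ∫ x, b k x ∂μ := by
          rw [integral_const, probReal_univ, integral_finset_sum _ fun k _ => hb_int k]
          simp
  -- sizes in terms of sums of integrals
  have sizeS : avgSize μ S = ∑ k, ∫ x, cS k x ∂μ := by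
    unfold avgSize
    calc ∫ x, ((S x).card : ℝ) ∂μ
        = ∫ x, ∑ k : Fin C, cS k x ∂μ := by
          refine integral_congr_ae (ae_of_all _ fun x => ?_)
          simp only [hcSdef]
          rw [Finset.sum_ite_mem, Finset.univ_inter, Finset.sum_const, nsmul_eq_mul, mul_one]
      _ = ∑ k, ∫ x, cS k x ∂μ := integral_finset_sum _ fun k _ => hcS_int k
  have sizeU : avgSize μ (fun x => Splus μ η 𝒦 x ∪ T x) = ∑ k, ∫ x, cU k x ∂μ := by
    unfold avgSize
    calc ∫ x, (((Splus μ η 𝒦 x ∪ T x)).card : ℝ) ∂μ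
        = ∫ x, ∑ k : Fin C, cU k x ∂μ := by
          refine integral_congr_ae (ae_of_all _ fun x => ?_)
          simp only [hcUdef]
          rw [Finset.sum_ite_mem, Finset.univ_inter, Finset.sum_const, nsmul_eq_mul, mul_one]
      _ = ∑ k, ∫ x, cU k x ∂μ := integral_finset_sum _ fun k _ => hcU_int k
  -- the union has average size 𝒦
  have hPlus_card_int : Integrable (fun x => ((Splus μ η 𝒦 x).card : ℝ)) μ := by
    refine intble_of_bound μ _ C ?_ ?_
    · have : (fun x => ((Splus μ η 𝒦 x).card : ℝ))
          = fun x => ∑ k : Fin C, (if k ∈ Splus μ η 𝒦 x then (1:ℝ) else 0) := by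
        ext x; simp [Finset.sum_ite_mem]
      rw [this]
      exact Finset.measurable_sum _ fun k _ =>
        Measurable.ite (hPlus_meas k) measurable_const measurable_const
    · intro x
      rw [abs_of_nonneg (by positivity)]
      exact_mod_cast Finset.card_le_card (Finset.subset_univ _) |>.trans (by simp)
  have hT_card_int : Integrable (fun x => ((T x).card : ℝ)) μ := by
    refine intble_of_bound μ _ C ?_ ?_
    · have : (fun x => ((T x).card : ℝ))
          = fun x => ∑ k : Fin C, (if k ∈ T x then (1:ℝ) else 0) := by
        ext x; simp [Finset.sum_ite_mem]
      rw [this]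
      exact Finset.measurable_sum _ fun k _ =>
        Measurable.ite (hT_meas k) measurable_const measurable_const
    · intro x
      rw [abs_of_nonneg (by positivity)]
      exact_mod_cast Finset.card_le_card (Finset.subset_univ _) |>.trans (by simp)
  have sizeU_K : avgSize μ (fun x => Splus μ η 𝒦 x ∪ T x) = 𝒦 := by
    unfold avgSize
    calc ∫ x, (((Splus μ η 𝒦 x ∪ T x)).card : ℝ) ∂μ
        = ∫ x, (((Splus μ η 𝒦 x).card : ℝ) + ((T x).card : ℝ)) ∂μ := by
          refine integral_congr_ae (ae_of_all _ fun x => ?_)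
          show (((Splus μ η 𝒦 x ∪ T x)).card : ℝ) = _
          rw [Finset.card_union_of_disjoint (hdisj x)]
          push_cast
          ring
      _ = (∫ x, ((Splus μ η 𝒦 x).card : ℝ) ∂μ) + ∫ x, ((T x).card : ℝ) ∂μ :=
          integral_add hPlus_card_int hT_card_int
      _ = avgSize μ (Splus μ η 𝒦) + avgSize μ T := rfl
      _ = 𝒦 := by rw [hT_size]; ring
  -- main computation
  have main : errRate μ η S - errRate μ η (fun x => Splus μ η 𝒦 x ∪ T x)
      = ∑ k, ∫ x, d k x ∂μ := by
    rw [errS, errU]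
    have step : ∀ k : Fin C, (∫ x, b k x ∂μ) - ∫ x, a k x ∂μ
        = (∫ x, d k x ∂μ) + lam * ((∫ x, cU k x ∂μ) - ∫ x, cS k x ∂μ) := by
      intro k
      rw [← integral_sub (hb_int k) (ha_int k)]
      have : ∀ x, b k x - a k x = d k x + lam * (cU k x - cS k x) := key k
      calc ∫ x, (b k x - a k x) ∂μ
          = ∫ x, (d k x + lam * (cU k x - cS k x)) ∂μ :=
            integral_congr_ae (ae_of_all _ this)
        _ = (∫ x, d k x ∂μ) + ∫ x, lam * (cU k x - cS k x) ∂μ :=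
            integral_add (hd_int k) (((hcU_int k).sub (hcS_int k)).const_mul lam)
        _ = (∫ x, d k x ∂μ) + lam * ((∫ x, cU k x ∂μ) - ∫ x, cS k x ∂μ) := by
            rw [integral_const_mul, integral_sub (hcU_int k) (hcS_int k)]
    have : (1 - ∑ k, ∫ x, a k x ∂μ) - (1 - ∑ k, ∫ x, b k x ∂μ)
        = ∑ k : Fin C, ((∫ x, b k x ∂μ) - ∫ x, a k x ∂μ) := by
      rw [Finset.sum_sub_distrib]
      ring
    rw [this]
    calc ∑ k : Fin C, ((∫ x, b k x ∂μ) - ∫ x, a k x ∂μ)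
        = ∑ k : Fin C, ((∫ x, d k x ∂μ) + lam * ((∫ x, cU k x ∂μ) - ∫ x, cS k x ∂μ)) := by
          exact Finset.sum_congr rfl fun k _ => step k
      _ = (∑ k, ∫ x, d k x ∂μ)
          + lam * ((∑ k, ∫ x, cU k x ∂μ) - ∑ k, ∫ x, cS k x ∂μ) := by
          rw [Finset.sum_add_distrib, ← Finset.mul_sum, Finset.sum_sub_distrib]
      _ = ∑ k, ∫ x, d k x ∂μ := by
          rw [← sizeU, ← sizeS, sizeU_K, hS_size]
          ring
  have hd_nonneg : ∀ k, 0 ≤ ∫ x, d k x ∂μ := by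
    intro k
    refine integral_nonneg fun x => ?_
    simp only [hddef]
    positivity
  constructor
  · rw [main]
  · have h1 : 0 ≤ ∑ k, ∫ x, d k x ∂μ := Finset.sum_nonneg fun k _ => hd_nonneg k
    linarith [main, h1]
end

section
/- For every integer K with 1 ≤ K ≤ C, the error rate of the optimal average-K classifier is at most that of the optimal top-K classifier: ℰ(𝒮_K^*) ≤ ℰ(S_K^*). -/
open MeasureTheory Finset

private lemma measurable_selSum {𝒳 : Type*} [MeasurableSpace 𝒳] {C : ℕ}
    (f : 𝒳 → Fin C → ℝ) (hf : ∀ k, Measurable fun x => f x k)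
    (S : 𝒳 → Finset (Fin C)) (hS : ∀ k, MeasurableSet {x | k ∈ S x}) :
    Measurable fun x => ∑ k ∈ S x, f x k := by
  have heq : (fun x => ∑ k ∈ S x, f x k)
      = fun x => ∑ k : Fin C, Set.indicator {x | k ∈ S x} (fun x => f x k) x := by
    funext x
    simp only [Set.indicator_apply, Set.mem_setOf_eq]
    rw [Finset.sum_ite_mem, Finset.univ_inter]
  rw [heq]
  exact Finset.measurable_sum _ fun k _ => (hf k).indicator (hS k)

/-- for every integer `1 ≤ K ≤ C`, the optimal average-`K` classifier has
error rate at most that of the optimal top-`K` classifier: `ℰ(𝒮_K^*) ≤ ℰ(S_K^*)`. -/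
theorem stmt_2 {𝒳 : Type*} [MeasurableSpace 𝒳] (μ : Measure 𝒳) [IsProbabilityMeasure μ]
    {C : ℕ} (η : 𝒳 → Fin C → ℝ)
    (hη : ∀ k, Measurable fun x => η x k)
    (hη0 : ∀ x k, 0 ≤ η x k) (hη1 : ∀ x, ∑ k, η x k = 1)
    (K : ℕ) (hK1 : 1 ≤ K) (hKC : K ≤ C)
    -- the optimal top-K classifier: K indices realizing the K largest values of η(x)
    (StopK : 𝒳 → Finset (Fin C))
    (hS_meas : ∀ k, MeasurableSet {x | k ∈ StopK x})
    (hS_card : ∀ x, (StopK x).card = K)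
    (hS_top : ∀ x, ∀ k ∈ StopK x, ∀ j, j ∉ StopK x → η x j ≤ η x k)
    -- the tie-breaking part of the optimal average-K classifier, assumed to exist
    (T : 𝒳 → Finset (Fin C))
    (hT_meas : ∀ k, MeasurableSet {x | k ∈ T x})
    (hT_tie : ∀ x, ∀ k ∈ T x, η x k = lamThresh μ η (K : ℝ))
    (hT_size : avgSize μ T = (K : ℝ) - avgSize μ (Splus μ η (K : ℝ))) :
    errRate μ η (fun x => Splus μ η (K : ℝ) x ∪ T x) ≤ errRate μ η StopK := by
  classical
  set lam := lamThresh μ η (K : ℝ) with hlam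
  set U : 𝒳 → Finset (Fin C) := fun x => Splus μ η (K : ℝ) x ∪ T x with hU
  have hmemS : ∀ x k, k ∈ Splus μ η (K : ℝ) x ↔ lam < η x k := by
    intro x k; simp [Splus, ← hlam]
  have hSplus_meas : ∀ k, MeasurableSet {x | k ∈ Splus μ η (K : ℝ) x} := by
    intro k
    have : {x | k ∈ Splus μ η (K : ℝ) x} = {x | lam < η x k} := by
      ext x; exact hmemS x k
    rw [this]; exact measurableSet_lt measurable_const (hη k)
  have hUmeas : ∀ k, MeasurableSet {x | k ∈ U x} := by
    intro k
    have : {x | k ∈ U x} = {x | k ∈ Splus μ η (K : ℝ) x} ∪ {x | k ∈ T x} := by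
      ext x; simp [hU]
    rw [this]; exact (hSplus_meas k).union (hT_meas k)
  have hd : ∀ x, Disjoint (Splus μ η (K : ℝ) x) (T x) := by
    intro x
    rw [Finset.disjoint_left]
    intro k hk hkT
    have h1 := (hmemS x k).mp hk
    have h2 := hT_tie x k hkT
    linarith
  -- pointwise key inequality
  have key : ∀ x, (∑ k ∈ StopK x, η x k) - lam * (K : ℝ)
      ≤ (∑ k ∈ U x, η x k) - lam * ((U x).card : ℝ) := by
    intro x
    have hsplit : ∑ k ∈ U x, η x k
        = ∑ k ∈ Splus μ η (K : ℝ) x, η x k + ∑ k ∈ T x, η x k := Finset.sum_union (hd x)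
    have hcardU : ((U x).card : ℝ)
        = ((Splus μ η (K : ℝ) x).card : ℝ) + ((T x).card : ℝ) := by
      rw [show (U x).card = (Splus μ η (K : ℝ) x).card + (T x).card from
        Finset.card_union_of_disjoint (hd x)]
      push_cast; ring
    have hTsum : ∑ k ∈ T x, η x k = lam * ((T x).card : ℝ) := by
      rw [Finset.sum_congr rfl (fun k hk => hT_tie x k hk),
        Finset.sum_const, nsmul_eq_mul, mul_comm]
    have e1 : ∑ k ∈ StopK x, (η x k - lam)
        = (∑ k ∈ StopK x, η x k) - lam * ((StopK x).card : ℝ) := by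
      rw [Finset.sum_sub_distrib, Finset.sum_const, nsmul_eq_mul, mul_comm]
    have e2 : ∑ k ∈ Splus μ η (K : ℝ) x, (η x k - lam)
        = (∑ k ∈ Splus μ η (K : ℝ) x, η x k) - lam * ((Splus μ η (K : ℝ) x).card : ℝ) := by
      rw [Finset.sum_sub_distrib, Finset.sum_const, nsmul_eq_mul, mul_comm]
    have h1 : ∑ k ∈ StopK x, (η x k - lam)
        ≤ ∑ k ∈ Splus μ η (K : ℝ) x, (η x k - lam) := by
      have hsub : ∑ k ∈ StopK x ∩ Splus μ η (K : ℝ) x, (η x k - lam)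
          + ∑ k ∈ StopK x \ Splus μ η (K : ℝ) x, (η x k - lam)
          = ∑ k ∈ StopK x, (η x k - lam) := Finset.sum_inter_add_sum_sdiff _ _ _
      have hneg : ∑ k ∈ StopK x \ Splus μ η (K : ℝ) x, (η x k - lam) ≤ 0 := by
        refine Finset.sum_nonpos fun k hk => ?_
        have hk2 : ¬ lam < η x k := fun h => (Finset.mem_sdiff.mp hk).2 ((hmemS x k).mpr h)
        linarith [not_lt.mp hk2]
      have hpos : ∑ k ∈ StopK x ∩ Splus μ η (K : ℝ) x, (η x k - lam)
          ≤ ∑ k ∈ Splus μ η (K : ℝ) x, (η x k - lam) := by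
        refine Finset.sum_le_sum_of_subset_of_nonneg Finset.inter_subset_right ?_
        intro k hk _
        have := (hmemS x k).mp hk
        linarith
      linarith
    have hK : ((StopK x).card : ℝ) = (K : ℝ) := by exact_mod_cast hS_card x
    rw [hK] at e1
    rw [e1, e2] at h1
    rw [hsplit, hcardU, hTsum, mul_add]
    linarith
  -- integrability facts
  have hbound : ∀ (S : 𝒳 → Finset (Fin C)), (∀ k, MeasurableSet {x | k ∈ S x}) →
      Integrable (fun x => ∑ k ∈ S x, η x k) μ := by
    intro S hS
    refine (integrable_const (1 : ℝ)).mono'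
      (measurable_selSum η hη S hS).aestronglyMeasurable ?_
    refine Filter.Eventually.of_forall fun x => ?_
    rw [Real.norm_eq_abs, abs_of_nonneg (Finset.sum_nonneg fun k _ => hη0 x k)]
    calc ∑ k ∈ S x, η x k ≤ ∑ k, η x k :=
          Finset.sum_le_sum_of_subset_of_nonneg (Finset.subset_univ _) fun k _ _ => hη0 x k
      _ = 1 := hη1 x
  have hcard : ∀ (S : 𝒳 → Finset (Fin C)), (∀ k, MeasurableSet {x | k ∈ S x}) →
      Integrable (fun x => ((S x).card : ℝ)) μ := by
    intro S hS
    have hm : Measurable fun x => ((S x).card : ℝ) := by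
      have heq : (fun x => ((S x).card : ℝ)) = fun x => ∑ k ∈ S x, (1 : ℝ) := by
        funext x; rw [Finset.sum_const, nsmul_eq_mul, mul_one]
      rw [heq]
      exact measurable_selSum (fun _ _ => 1) (fun _ => measurable_const) S hS
    refine (integrable_const (C : ℝ)).mono' hm.aestronglyMeasurable ?_
    refine Filter.Eventually.of_forall fun x => ?_
    rw [Real.norm_eq_abs, abs_of_nonneg (by positivity)]
    exact_mod_cast le_trans (Finset.card_le_univ (S x)) (by simp)
  have hIS := hbound StopK hS_meas
  have hIU := hbound U hUmeas
  have hcU := hcard U hUmeas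
  have hcP := hcard (Splus μ η (K : ℝ)) hSplus_meas
  have hcT := hcard T hT_meas
  have hcUval : ∫ x, ((U x).card : ℝ) ∂μ = (K : ℝ) := by
    have heq : (fun x => ((U x).card : ℝ))
        = fun x => ((Splus μ η (K : ℝ) x).card : ℝ) + ((T x).card : ℝ) := by
      funext x
      rw [show (U x).card = (Splus μ η (K : ℝ) x).card + (T x).card from
        Finset.card_union_of_disjoint (hd x)]
      push_cast; ring
    rw [heq, integral_add hcP hcT]
    have h := hT_size
    simp only [avgSize] at h
    linarith
  have hmain : ∫ x, ((∑ k ∈ StopK x, η x k) - lam * (K : ℝ)) ∂μ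
      ≤ ∫ x, ((∑ k ∈ U x, η x k) - lam * ((U x).card : ℝ)) ∂μ :=
    integral_mono (hIS.sub (integrable_const _)) (hIU.sub (hcU.const_mul lam)) key
  rw [integral_sub hIS (integrable_const _), integral_sub hIU (hcU.const_mul lam),
    integral_const, integral_const_mul, hcUval] at hmain
  simp only [measure_univ, ENNReal.toReal_one, probReal_univ, one_smul] at hmain
  simp only [errRate]
  rw [integral_sub (integrable_const _) hIU, integral_sub (integrable_const _) hIS]
  linarith
end

section
/- For a fixed integer K with 1 ≤ K < C, the adaptive gain Δ_K = ℰ(S_K^*) − ℰ(𝒮_K^*) is zero if and only if μ{x : η̃_K(x) ≥ λ_K ≥ η̃_{K+1}(x)} = 1. -/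
open MeasureTheory Finset

/- ### Auxiliary lemmas -/

lemma pointwise_equiv {C K : ℕ} (hK1 : 1 ≤ K) (hKC : K < C)
    (η ηs : Fin C → ℝ) (σ : Equiv.Perm (Fin C))
    (hσ : ∀ k, ηs k = η (σ k)) (hmono : ∀ i j : Fin C, i ≤ j → ηs j ≤ ηs i)
    (S : Finset (Fin C)) (hcard : S.card = K)
    (htop : ∀ k ∈ S, ∀ j, j ∉ S → η j ≤ η k) (l : ℝ) :
    ((∀ k ∈ S, l ≤ η k) ∧ (∀ k ∉ S, η k ≤ l)) ↔
      (ηs ⟨K, hKC⟩ ≤ l ∧ l ≤ ηs ⟨K - 1, by omega⟩) := by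
  have hK1C : K - 1 < C := by omega
  set a := ηs ⟨K - 1, hK1C⟩ with ha
  set b := ηs ⟨K, hKC⟩ with hb
  -- Claim A : every element of S has η ≥ a
  have claimA : ∀ k ∈ S, a ≤ η k := by
    intro k0 hk0
    by_contra hlt
    push_neg at hlt
    have hsub : insert k0 ((Finset.Iic (⟨K - 1, hK1C⟩ : Fin C)).image σ) ⊆ S := by
      intro k hk
      rcases Finset.mem_insert.mp hk with rfl | hk
      · exact hk0
      · obtain ⟨i, hi, rfl⟩ := Finset.mem_image.mp hk
        by_contra hns
        have h1 : η (σ i) ≤ η k0 := htop k0 hk0 _ hns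
        have h2 : a ≤ ηs i := hmono i _ (Finset.mem_Iic.mp hi)
        rw [hσ] at h2; linarith
    have hnotmem : k0 ∉ (Finset.Iic (⟨K - 1, hK1C⟩ : Fin C)).image σ := by
      intro hmem
      obtain ⟨i, hi, hik⟩ := Finset.mem_image.mp hmem
      have h2 : a ≤ ηs i := hmono i _ (Finset.mem_Iic.mp hi)
      rw [hσ, hik] at h2; linarith
    have hc : (insert k0 ((Finset.Iic (⟨K - 1, hK1C⟩ : Fin C)).image σ)).card = K + 1 := by
      rw [Finset.card_insert_of_notMem hnotmem, Finset.card_image_of_injective _ σ.injective,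
        Fin.card_Iic]
      simp; omega
    have := Finset.card_le_card hsub
    omega
  -- Claim B : every element outside S has η ≤ b
  have claimB : ∀ k ∉ S, η k ≤ b := by
    intro k0 hk0
    by_contra hlt
    push_neg at hlt
    have hsub : (insert k0 S).image σ.symm ⊆ Finset.Iio (⟨K, hKC⟩ : Fin C) := by
      intro i hi
      obtain ⟨k, hk, rfl⟩ := Finset.mem_image.mp hi
      have hbk : b < η k := by
        rcases Finset.mem_insert.mp hk with rfl | hk
        · exact hlt
        · exact lt_of_lt_of_le hlt (htop k hk _ hk0)
      rw [Finset.mem_Iio]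
      by_contra hge
      push_neg at hge
      have : ηs (σ.symm k) ≤ b := hmono _ _ hge
      rw [hσ, Equiv.apply_symm_apply] at this
      linarith
    have hc1 : ((insert k0 S).image σ.symm).card = K + 1 := by
      rw [Finset.card_image_of_injective _ σ.symm.injective,
        Finset.card_insert_of_notMem hk0, hcard]
    have := Finset.card_le_card hsub
    rw [hc1, Fin.card_Iio] at this
    simp only [Fin.val_mk] at this; omega
  constructor
  · rintro ⟨h1, h2⟩
    constructor
    · -- b ≤ l
      by_contra hlb
      push_neg at hlb
      have hsub : (Finset.Iic (⟨K, hKC⟩ : Fin C)).image σ ⊆ S := by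
        intro k hk
        obtain ⟨i, hi, rfl⟩ := Finset.mem_image.mp hk
        have : b ≤ ηs i := hmono i _ (Finset.mem_Iic.mp hi)
        rw [hσ] at this
        by_contra hns
        have := h2 _ hns
        linarith
      have := Finset.card_le_card hsub
      rw [Finset.card_image_of_injective _ σ.injective, Fin.card_Iic] at this
      simp only [Fin.val_mk] at this; omega
    · -- l ≤ a
      by_contra hla
      push_neg at hla
      have hsub : S.image σ.symm ⊆ Finset.Iio (⟨K - 1, hK1C⟩ : Fin C) := by
        intro i hi
        obtain ⟨k, hk, rfl⟩ := Finset.mem_image.mp hi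
        rw [Finset.mem_Iio]
        by_contra hge
        push_neg at hge
        have h3 : ηs (σ.symm k) ≤ a := hmono _ _ hge
        rw [hσ, Equiv.apply_symm_apply] at h3
        have := h1 k hk
        linarith
      have := Finset.card_le_card hsub
      rw [Finset.card_image_of_injective _ σ.symm.injective, hcard, Fin.card_Iio] at this
      simp only [Fin.val_mk] at this; omega
  · rintro ⟨hbl, hla⟩
    exact ⟨fun k hk => le_trans hla (claimA k hk), fun k hk => le_trans (claimB k hk) hbl⟩

lemma fval_nonneg {C : ℕ} (η : Fin C → ℝ) (S : Finset (Fin C)) (l : ℝ) :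
    0 ≤ (∑ k, max (η k - l) 0) - ∑ k ∈ S, (η k - l) := by
  have h : ∑ k ∈ S, (η k - l) ≤ ∑ k ∈ S, max (η k - l) 0 :=
    Finset.sum_le_sum fun k _ => le_max_left _ _
  have h2 : ∑ k ∈ S, max (η k - l) 0 ≤ ∑ k, max (η k - l) 0 :=
    Finset.sum_le_sum_of_subset_of_nonneg (Finset.subset_univ S)
      (fun k _ _ => le_max_right _ _)
  linarith

lemma fval_eq_zero_iff {C : ℕ} (η : Fin C → ℝ) (S : Finset (Fin C)) (l : ℝ) :
    (∑ k, max (η k - l) 0) - ∑ k ∈ S, (η k - l) = 0 ↔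
      ((∀ k ∈ S, l ≤ η k) ∧ (∀ k ∉ S, η k ≤ l)) := by
  have hsplit : ∑ k, max (η k - l) 0 = ∑ k ∈ S, max (η k - l) 0 + ∑ k ∈ Sᶜ, max (η k - l) 0 :=
    (Finset.sum_add_sum_compl S _).symm
  rw [hsplit]
  have hre : ∑ k ∈ S, max (η k - l) 0 + ∑ k ∈ Sᶜ, max (η k - l) 0 - ∑ k ∈ S, (η k - l)
      = ∑ k ∈ S, (max (η k - l) 0 - (η k - l)) + ∑ k ∈ Sᶜ, max (η k - l) 0 := by
    have := Finset.sum_sub_distrib (s := S) (f := fun k => max (η k - l) 0)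
      (g := fun k => η k - l)
    linarith
  rw [hre]
  have h1 : ∀ k ∈ S, 0 ≤ max (η k - l) 0 - (η k - l) := fun k _ => by
    simp [le_max_left]
  have h2 : ∀ k ∈ Sᶜ, 0 ≤ max (η k - l) 0 := fun k _ => le_max_right _ _
  constructor
  · intro h
    have hsum1 : ∑ k ∈ S, (max (η k - l) 0 - (η k - l)) = 0 := by
      have := Finset.sum_nonneg h2
      have := Finset.sum_nonneg h1
      linarith
    have hsum2 : ∑ k ∈ Sᶜ, max (η k - l) 0 = 0 := by
      have := Finset.sum_nonneg h1
      linarith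
    rw [Finset.sum_eq_zero_iff_of_nonneg h1] at hsum1
    rw [Finset.sum_eq_zero_iff_of_nonneg h2] at hsum2
    constructor
    · intro k hk
      have h3 := hsum1 k hk
      have h4 := le_max_right (η k - l) 0
      linarith
    · intro k hk
      have := hsum2 k (Finset.mem_compl.mpr hk)
      have := le_max_left (η k - l) 0
      linarith
  · rintro ⟨hS, hSc⟩
    have e1 : ∑ k ∈ S, (max (η k - l) 0 - (η k - l)) = 0 :=
      Finset.sum_eq_zero fun k hk => by
        have := hS k hk
        rw [max_eq_left (by linarith)]; ring
    have e2 : ∑ k ∈ Sᶜ, max (η k - l) 0 = 0 :=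
      Finset.sum_eq_zero fun k hk => by
        have := hSc k (Finset.mem_compl.mp hk)
        rw [max_eq_right (by linarith)]
    rw [e1, e2]; ring

section measHelpers
variable {𝒳 : Type*} [MeasurableSpace 𝒳] {C : ℕ}

lemma meas_sum_mem (η : 𝒳 → Fin C → ℝ) (hη : ∀ k, Measurable fun x => η x k)
    (S : 𝒳 → Finset (Fin C)) (hS : ∀ k, MeasurableSet {x | k ∈ S x}) :
    Measurable fun x => ∑ k ∈ S x, η x k := by
  have h : (fun x => ∑ k ∈ S x, η x k)
      = fun x => ∑ k : Fin C, if k ∈ S x then η x k else 0 := by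
    funext x
    rw [Finset.sum_ite_mem, Finset.univ_inter]
  rw [h]
  exact Finset.measurable_sum _ fun k _ => Measurable.ite (hS k) (hη k) measurable_const

lemma meas_card (S : 𝒳 → Finset (Fin C)) (hS : ∀ k, MeasurableSet {x | k ∈ S x}) :
    Measurable fun x => ((S x).card : ℝ) := by
  have h : (fun x => ((S x).card : ℝ)) = fun x => ∑ k ∈ S x, (1 : ℝ) := by
    funext x; simp
  rw [h]
  exact meas_sum_mem _ (fun k => measurable_const) S hS

lemma int_of_bound (μ : Measure 𝒳) [IsFiniteMeasure μ]
    {f : 𝒳 → ℝ} (hf : Measurable f) (B : ℝ) (hB : ∀ x, |f x| ≤ B) : Integrable f μ :=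
  (integrable_const B).mono' hf.aestronglyMeasurable (ae_of_all _ (by simpa using hB))

end measHelpers

lemma abs_sum_le_of_bound {C : ℕ} (s : Finset (Fin C)) (g : Fin C → ℝ) (B : ℝ)
    (hB0 : 0 ≤ B) (hB : ∀ k, |g k| ≤ B) : |∑ k ∈ s, g k| ≤ C * B := by
  calc |∑ k ∈ s, g k| ≤ ∑ k ∈ s, |g k| := Finset.abs_sum_le_sum_abs _ _
    _ ≤ ∑ k ∈ s, B := Finset.sum_le_sum fun k _ => hB k
    _ = s.card * B := by rw [Finset.sum_const, nsmul_eq_mul]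
    _ ≤ C * B := by
        have := Finset.card_le_univ s
        have : (s.card : ℝ) ≤ C := by
          simpa using ((Nat.cast_le (α := ℝ)).mpr (le_trans (Finset.card_le_univ s) (by simp) : s.card ≤ C))
        nlinarith

lemma card_cast_le {C : ℕ} (s : Finset (Fin C)) : (s.card : ℝ) ≤ C := by
  have := Finset.card_le_univ s
  simp only [Finset.card_univ, Fintype.card_fin] at this
  exact_mod_cast this

theorem stmt_3 {𝒳 : Type*} [MeasurableSpace 𝒳] (μ : Measure 𝒳) [IsProbabilityMeasure μ]
    {C : ℕ} (η : 𝒳 → Fin C → ℝ)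
    (hη : ∀ k, Measurable fun x => η x k)
    (hη0 : ∀ x k, 0 ≤ η x k) (hη1 : ∀ x, ∑ k, η x k = 1)
    (K : ℕ) (hK1 : 1 ≤ K) (hKC : K < C)
    -- the decreasing rearrangement of the conditional probabilities
    (ηs : 𝒳 → Fin C → ℝ)
    (hηs : ∀ x, ∃ σ : Equiv.Perm (Fin C), (∀ k, ηs x k = η x (σ k)) ∧
      ∀ i j : Fin C, i ≤ j → ηs x j ≤ ηs x i)
    -- the optimal top-K classifier
    (StopK : 𝒳 → Finset (Fin C))
    (hS_meas : ∀ k, MeasurableSet {x | k ∈ StopK x})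
    (hS_card : ∀ x, (StopK x).card = K)
    (hS_top : ∀ x, ∀ k ∈ StopK x, ∀ j, j ∉ StopK x → η x j ≤ η x k)
    -- the tie-breaking part of the optimal average-K classifier, assumed to exist
    (T : 𝒳 → Finset (Fin C))
    (hT_meas : ∀ k, MeasurableSet {x | k ∈ T x})
    (hT_tie : ∀ x, ∀ k ∈ T x, η x k = lamThresh μ η (K : ℝ))
    (hT_size : avgSize μ T = (K : ℝ) - avgSize μ (Splus μ η (K : ℝ))) :
    errRate μ η StopK - errRate μ η (fun x => Splus μ η (K : ℝ) x ∪ T x) = 0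
      ↔ μ {x | ηs x ⟨K, hKC⟩ ≤ lamThresh μ η (K : ℝ)
            ∧ lamThresh μ η (K : ℝ) ≤ ηs x ⟨K - 1, by omega⟩} = 1 := by
  set l := lamThresh μ η (K : ℝ) with hl
  set SP := Splus μ η (K : ℝ) with hSP
  -- basic bounds on η
  have hη01 : ∀ x k, η x k ≤ 1 := by
    intro x k
    have := Finset.single_le_sum (f := η x) (fun j _ => hη0 x j) (Finset.mem_univ k)
    rwa [hη1 x] at this
  have habs : ∀ x k, |η x k| ≤ 1 := fun x k => abs_le.mpr ⟨by linarith [hη0 x k], hη01 x k⟩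
  have habs' : ∀ x k, |η x k - l| ≤ 1 + |l| := by
    intro x k
    calc |η x k - l| ≤ |η x k| + |l| := abs_sub _ _
      _ ≤ 1 + |l| := by linarith [habs x k]
  -- membership measurability
  have hSP_mem : ∀ k, {x | k ∈ SP x} = {x | l < η x k} := by
    intro k; ext x; simp [hSP, Splus, ← hl]
  have hSP_meas : ∀ k, MeasurableSet {x | k ∈ SP x} := by
    intro k; rw [hSP_mem k]
    exact measurableSet_lt measurable_const (hη k)
  have hAvg_meas : ∀ k, MeasurableSet {x | k ∈ SP x ∪ T x} := by
    intro k
    have : {x | k ∈ SP x ∪ T x} = {x | k ∈ SP x} ∪ {x | k ∈ T x} := by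
      ext x; simp
    rw [this]
    exact (hSP_meas k).union (hT_meas k)
  -- the key functions
  set gTop := fun x => ∑ k ∈ StopK x, η x k with hgTop
  set gAvg := fun x => ∑ k ∈ SP x ∪ T x, η x k with hgAvg
  set cAvg := fun x => ((SP x ∪ T x).card : ℝ) with hcAvg
  set F := fun x => (∑ k, max (η x k - l) 0) - ∑ k ∈ StopK x, (η x k - l) with hF
  -- measurability
  have mTop : Measurable gTop := meas_sum_mem η hη StopK hS_meas
  have mAvg : Measurable gAvg := meas_sum_mem η hη _ hAvg_meas
  have mcAvg : Measurable cAvg := meas_card _ hAvg_meas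
  have mF : Measurable F := by
    apply Measurable.sub
    · exact Finset.measurable_sum _ fun k _ => ((hη k).sub measurable_const).max measurable_const
    · exact meas_sum_mem (fun x k => η x k - l) (fun k => (hη k).sub measurable_const)
        StopK hS_meas
  -- integrability
  have iTop : Integrable gTop μ :=
    int_of_bound μ mTop (C * 1) fun x => abs_sum_le_of_bound _ _ 1 zero_le_one (habs x)
  have iAvg : Integrable gAvg μ :=
    int_of_bound μ mAvg (C * 1) fun x => abs_sum_le_of_bound _ _ 1 zero_le_one (habs x)
  have icAvg : Integrable cAvg μ := by
    apply int_of_bound μ mcAvg (C : ℝ)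
    intro x
    rw [abs_of_nonneg (by positivity)]
    exact card_cast_le _
  have hmaxabs : ∀ x k, |max (η x k - l) 0| ≤ 1 + |l| := by
    intro x k
    rw [abs_of_nonneg (le_max_right _ _)]
    rcases max_cases (η x k - l) 0 with ⟨h, _⟩ | ⟨h, _⟩
    · rw [h]; calc η x k - l ≤ |η x k - l| := le_abs_self _
        _ ≤ 1 + |l| := habs' x k
    · rw [h]; positivity
  have iF : Integrable F μ := by
    apply int_of_bound μ mF (C * (1 + |l|) + C * (1 + |l|))
    intro x
    have b1 : |∑ k, max (η x k - l) 0| ≤ C * (1 + |l|) :=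
      abs_sum_le_of_bound _ _ _ (by positivity) (hmaxabs x)
    have b2 : |∑ k ∈ StopK x, (η x k - l)| ≤ C * (1 + |l|) :=
      abs_sum_le_of_bound _ _ _ (by positivity) (habs' x)
    calc |F x| ≤ |∑ k, max (η x k - l) 0| + |∑ k ∈ StopK x, (η x k - l)| := abs_sub _ _
      _ ≤ _ := by linarith
  -- integrability of the pieces of cAvg
  have mcSP : Measurable fun x => ((SP x).card : ℝ) := meas_card _ hSP_meas
  have mcT : Measurable fun x => ((T x).card : ℝ) := meas_card _ hT_meas
  have icSP : Integrable (fun x => ((SP x).card : ℝ)) μ := by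
    apply int_of_bound μ mcSP (C : ℝ)
    intro x
    rw [abs_of_nonneg (by positivity)]
    exact card_cast_le _
  have icT : Integrable (fun x => ((T x).card : ℝ)) μ := by
    apply int_of_bound μ mcT (C : ℝ)
    intro x
    rw [abs_of_nonneg (by positivity)]
    exact card_cast_le _
  -- disjointness of SP and T
  have hdisj : ∀ x, Disjoint (SP x) (T x) := by
    intro x
    rw [Finset.disjoint_left]
    intro k hk1 hk2
    have h1 : l < η x k := by
      have := hk1; rw [hSP, Splus, Finset.mem_filter] at this; exact this.2
    have h2 : η x k = l := hT_tie x k hk2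
    linarith
  -- ∫ cAvg = K
  have hcAvgK : ∫ x, cAvg x ∂μ = (K : ℝ) := by
    have hpt : ∀ x, cAvg x = ((SP x).card : ℝ) + ((T x).card : ℝ) := by
      intro x
      show ((SP x ∪ T x).card : ℝ) = _
      rw [Finset.card_union_of_disjoint (hdisj x)]
      push_cast; ring
    calc ∫ x, cAvg x ∂μ = ∫ x, (((SP x).card : ℝ) + ((T x).card : ℝ)) ∂μ := by
          exact integral_congr_ae (ae_of_all _ hpt)
      _ = (∫ x, ((SP x).card : ℝ) ∂μ) + ∫ x, ((T x).card : ℝ) ∂μ := integral_add icSP icT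
      _ = (K : ℝ) := by
          have := hT_size
          rw [avgSize, avgSize] at this
          linarith
  -- pointwise identity: F x = (gAvg x - gTop x) + (l * K - l * cAvg x)
  have hFpt : ∀ x, F x = (gAvg x - gTop x) + (l * (K : ℝ) - l * cAvg x) := by
    intro x
    have p1 : ∑ k ∈ SP x ∪ T x, (η x k - l) = ∑ k, max (η x k - l) 0 := by
      rw [Finset.sum_union (hdisj x)]
      have hT0 : ∑ k ∈ T x, (η x k - l) = 0 :=
        Finset.sum_eq_zero fun k hk => by rw [hT_tie x k hk]; ring
      have hSP0 : ∑ k ∈ SP x, (η x k - l) = ∑ k, max (η x k - l) 0 := by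
        rw [hSP, Splus, ← hl, Finset.sum_filter]
        apply Finset.sum_congr rfl
        intro k _
        rcases le_or_gt (η x k) l with h | h
        · rw [if_neg (not_lt.mpr h), max_eq_right (by linarith)]
        · rw [if_pos h, max_eq_left (by linarith)]
      rw [hT0, hSP0]; ring
    have p2 : ∑ k ∈ SP x ∪ T x, (η x k - l) = gAvg x - l * cAvg x := by
      rw [Finset.sum_sub_distrib, Finset.sum_const, nsmul_eq_mul, hgAvg, hcAvg]
      ring
    have p3 : ∑ k ∈ StopK x, (η x k - l) = gTop x - l * (K : ℝ) := by
      rw [Finset.sum_sub_distrib, Finset.sum_const, nsmul_eq_mul, hS_card x, hgTop]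
      ring
    rw [hF]
    simp only []
    rw [← p1, p2, p3]
    ring
  -- ∫ F = errRate Top - errRate Avg
  have hΔ : errRate μ η StopK - errRate μ η (fun x => SP x ∪ T x) = ∫ x, F x ∂μ := by
    have e1 : errRate μ η StopK = 1 - ∫ x, gTop x ∂μ := by
      rw [errRate]
      rw [integral_sub (integrable_const 1) iTop]
      simp
    have e2 : errRate μ η (fun x => SP x ∪ T x) = 1 - ∫ x, gAvg x ∂μ := by
      rw [errRate]
      rw [integral_sub (integrable_const 1) iAvg]
      simp [hgAvg]
    have e3 : ∫ x, F x ∂μ = (∫ x, gAvg x ∂μ - ∫ x, gTop x ∂μ)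
        + (l * (K : ℝ) - l * ∫ x, cAvg x ∂μ) := by
      calc ∫ x, F x ∂μ
          = ∫ x, ((gAvg x - gTop x) + (l * (K : ℝ) - l * cAvg x)) ∂μ :=
            integral_congr_ae (ae_of_all _ hFpt)
        _ = (∫ x, (gAvg x - gTop x) ∂μ) + ∫ x, (l * (K : ℝ) - l * cAvg x) ∂μ :=
            integral_add (iAvg.sub iTop) ((integrable_const _).sub (icAvg.const_mul l))
        _ = (∫ x, gAvg x ∂μ - ∫ x, gTop x ∂μ)
            + (l * (K : ℝ) - l * ∫ x, cAvg x ∂μ) := by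
            rw [integral_sub iAvg iTop,
              integral_sub (integrable_const _) (icAvg.const_mul l),
              integral_const]
            simp [integral_const_mul]
    rw [e1, e2, e3, hcAvgK]
    ring
  -- the target set equals {x | F x = 0}
  have hTgt : {x | ηs x ⟨K, hKC⟩ ≤ l ∧ l ≤ ηs x ⟨K - 1, by omega⟩} = {x | F x = 0} := by
    ext x
    obtain ⟨σ, hσ, hmono⟩ := hηs x
    simp only [Set.mem_setOf_eq]
    rw [hF]
    rw [fval_eq_zero_iff (η x) (StopK x) l]
    exact (pointwise_equiv hK1 hKC (η x) (ηs x) σ hσ hmono (StopK x) (hS_card x)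
      (hS_top x) l).symm
  rw [hTgt, hΔ]
  have hF0 : 0 ≤ F := fun x => fval_nonneg (η x) (StopK x) l
  rw [integral_eq_zero_iff_of_nonneg hF0 iF]
  rw [← prob_compl_eq_zero_iff (measurableSet_eq_fun mF measurable_const)]
  rw [Filter.EventuallyEq, ae_iff]
  have hset : {a | ¬ F a = (0 : 𝒳 → ℝ) a} = {x | F x = 0}ᶜ := by
    ext a; simp
  rw [hset]
end

section
/- For a fixed integer K with 1 ≤ K < C, the adaptive gain admits the representation Δ_K = ∫ [ ∑_{k=1}^K (λ_K − η̃_k(x))⁺ + ∑_{k=K+1}^C (η̃_k(x) − λ_K)⁺ ] dμ(x), where a⁺ = max(a, 0). -/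
open MeasureTheory Finset

/- ### Auxiliary lemmas -/

lemma card_filter_lt_fin {C K : ℕ} (h : K ≤ C) :
    (Finset.univ.filter (fun j : Fin C => (j:ℕ) < K)).card = K := by
  rw [Finset.card_filter]
  rw [Fin.sum_univ_eq_sum_range (fun i => if i < K then 1 else 0)]
  rw [← Finset.card_filter]
  have : (Finset.range C).filter (fun i => i < K) = Finset.range K := by
    ext i; simp; omega
  rw [this, Finset.card_range]

lemma sum_eq_of_card_eq {α : Type*} [DecidableEq α] (v : α → ℝ) (A B : Finset α)
    (hcard : A.card = B.card)
    (hval : ∀ i ∈ A, i ∉ B → ∀ j ∈ B, j ∉ A → v i = v j) :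
    ∑ j ∈ A, v j = ∑ j ∈ B, v j := by
  have hsd : (A \ B).card = (B \ A).card := by
    have h1 := Finset.card_inter_add_card_sdiff A B
    have h2 := Finset.card_inter_add_card_sdiff B A
    rw [Finset.inter_comm] at h2
    omega
  have key : ∑ j ∈ A \ B, v j = ∑ j ∈ B \ A, v j := by
    rcases (A \ B).eq_empty_or_nonempty with he | ⟨i0, hi0⟩
    · have : (B \ A) = ∅ := Finset.card_eq_zero.mp (by rw [← hsd, he]; simp)
      rw [he, this]
    · have hBA : (B \ A).Nonempty :=
        Finset.card_pos.mp (by rw [← hsd]; exact Finset.card_pos.mpr ⟨i0, hi0⟩)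
      obtain ⟨j0, hj0⟩ := hBA
      have hi0' := Finset.mem_sdiff.mp hi0
      have hj0' := Finset.mem_sdiff.mp hj0
      have hval0 : v i0 = v j0 := hval i0 hi0'.1 hi0'.2 j0 hj0'.1 hj0'.2
      have e1 : ∑ j ∈ A \ B, v j = (A \ B).card • v j0 := by
        rw [← Finset.sum_const]
        refine Finset.sum_congr rfl fun i hi => ?_
        have hi' := Finset.mem_sdiff.mp hi
        exact hval i hi'.1 hi'.2 j0 hj0'.1 hj0'.2
      have e2 : ∑ j ∈ B \ A, v j = (B \ A).card • v j0 := by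
        rw [← Finset.sum_const]
        refine Finset.sum_congr rfl fun j hj => ?_
        have hj' := Finset.mem_sdiff.mp hj
        rw [← hval i0 hi0'.1 hi0'.2 j hj'.1 hj'.2, hval0]
      rw [e1, e2, hsd]
  calc ∑ j ∈ A, v j = ∑ j ∈ A ∩ B, v j + ∑ j ∈ A \ B, v j :=
        (Finset.sum_inter_add_sum_sdiff A B v).symm
    _ = ∑ j ∈ B ∩ A, v j + ∑ j ∈ B \ A, v j := by rw [key, Finset.inter_comm]
    _ = ∑ j ∈ B, v j := Finset.sum_inter_add_sum_sdiff B A v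

lemma integrable_sum_mem {𝒳 : Type*} [MeasurableSpace 𝒳] (μ : Measure 𝒳) [IsFiniteMeasure μ]
    {C : ℕ} (S : 𝒳 → Finset (Fin C)) (hS : ∀ k, MeasurableSet {x | k ∈ S x})
    (g : 𝒳 → Fin C → ℝ) (hg : ∀ k, Measurable fun x => g x k)
    (hb : ∀ x k, ‖g x k‖ ≤ 1) :
    Integrable (fun x => ∑ k ∈ S x, g x k) μ := by
  have heq : (fun x => ∑ k ∈ S x, g x k)
      = fun x => ∑ k : Fin C, ({x | k ∈ S x}).indicator (fun x => g x k) x := by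
    funext x
    have : ∀ k : Fin C, ({x | k ∈ S x}).indicator (fun x => g x k) x
        = if k ∈ S x then g x k else 0 := fun k => by
      by_cases h : k ∈ S x <;> simp [Set.indicator_apply, h]
    simp only [this]
    rw [Finset.sum_ite_mem, Finset.univ_inter]
  rw [heq]
  refine integrable_finset_sum _ fun k _ => ?_
  have hInt : Integrable (fun x => g x k) μ :=
    ⟨(hg k).aestronglyMeasurable,
      HasFiniteIntegral.of_bounded (ae_of_all μ fun x => hb x k)⟩
  exact hInt.indicator (hS k)

lemma min_max_aux1 (a lam : ℝ) : max (lam - a) 0 = lam - min a lam := by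
  rcases le_total a lam with h | h
  · rw [min_eq_left h, max_eq_left (by linarith)]
  · rw [min_eq_right h, max_eq_right (by linarith)]; ring

lemma min_max_aux2 (a lam : ℝ) : max (a - lam) 0 = a - min a lam := by
  rcases le_total a lam with h | h
  · rw [min_eq_left h, max_eq_right (by linarith)]; ring
  · rw [min_eq_right h, max_eq_left (by linarith)]

/-- for `1 ≤ K < C`, the adaptive gain admits the representation
`Δ_K = ∫ [∑_{k=1}^K (λ_K − η̃_k(x))⁺ + ∑_{k=K+1}^C (η̃_k(x) − λ_K)⁺] dμ(x)`.
Ranks `1,…,C` correspond to sorted indices `0,…,C−1`, i.e. `(k:ℕ) < K` means rank ≤ K. -/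
theorem stmt_7 {𝒳 : Type*} [MeasurableSpace 𝒳] (μ : Measure 𝒳) [IsProbabilityMeasure μ]
    {C : ℕ} (η : 𝒳 → Fin C → ℝ)
    (hη : ∀ k, Measurable fun x => η x k)
    (hη0 : ∀ x k, 0 ≤ η x k) (hη1 : ∀ x, ∑ k, η x k = 1)
    (K : ℕ) (hK1 : 1 ≤ K) (hKC : K < C)
    -- the decreasing rearrangement of the conditional probabilities
    (ηs : 𝒳 → Fin C → ℝ)
    (hηs : ∀ x, ∃ σ : Equiv.Perm (Fin C), (∀ k, ηs x k = η x (σ k)) ∧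
      ∀ i j : Fin C, i ≤ j → ηs x j ≤ ηs x i)
    -- the optimal top-K classifier
    (StopK : 𝒳 → Finset (Fin C))
    (hS_meas : ∀ k, MeasurableSet {x | k ∈ StopK x})
    (hS_card : ∀ x, (StopK x).card = K)
    (hS_top : ∀ x, ∀ k ∈ StopK x, ∀ j, j ∉ StopK x → η x j ≤ η x k)
    -- the tie-breaking part of the optimal average-K classifier, assumed to exist
    (T : 𝒳 → Finset (Fin C))
    (hT_meas : ∀ k, MeasurableSet {x | k ∈ T x})
    (hT_tie : ∀ x, ∀ k ∈ T x, η x k = lamThresh μ η (K : ℝ))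
    (hT_size : avgSize μ T = (K : ℝ) - avgSize μ (Splus μ η (K : ℝ))) :
    errRate μ η StopK - errRate μ η (fun x => Splus μ η (K : ℝ) x ∪ T x)
      = ∫ x, (∑ k : Fin C,
          if (k : ℕ) < K then max (lamThresh μ η (K : ℝ) - ηs x k) 0
          else max (ηs x k - lamThresh μ η (K : ℝ)) 0) ∂μ := by
  set lam := lamThresh μ η (K : ℝ) with hlam
  have hηle : ∀ x k, η x k ≤ 1 := fun x k => by
    calc η x k ≤ ∑ j, η x j := Finset.single_le_sum (fun j _ => hη0 x j) (Finset.mem_univ k)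
    _ = 1 := hη1 x
  have hnorm : ∀ x (k : Fin C), ‖η x k‖ ≤ 1 := fun x k => by
    rw [Real.norm_eq_abs, abs_of_nonneg (hη0 x k)]; exact hηle x k
  have hSplus_mem : ∀ x (k : Fin C), k ∈ Splus μ η (K:ℝ) x ↔ lam < η x k := by
    intro x k; simp [Splus, hlam]
  have hSplus_meas : ∀ k : Fin C, MeasurableSet {x | k ∈ Splus μ η (K:ℝ) x} := by
    intro k
    have : {x | k ∈ Splus μ η (K:ℝ) x} = {x | lam < η x k} := by
      ext x; simp [hSplus_mem]
    rw [this]; exact measurableSet_lt measurable_const (hη k)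
  have hU_meas : ∀ k : Fin C, MeasurableSet {x | k ∈ Splus μ η (K:ℝ) x ∪ T x} := by
    intro k
    have : {x | k ∈ Splus μ η (K:ℝ) x ∪ T x}
        = {x | k ∈ Splus μ η (K:ℝ) x} ∪ {x | k ∈ T x} := by
      ext x; simp
    rw [this]; exact (hSplus_meas k).union (hT_meas k)
  -- integrability
  have intA : Integrable (fun x => ∑ k ∈ StopK x, η x k) μ :=
    integrable_sum_mem μ StopK hS_meas η hη hnorm
  have intU : Integrable (fun x => ∑ k ∈ Splus μ η (K:ℝ) x ∪ T x, η x k) μ :=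
    integrable_sum_mem μ _ hU_meas η hη hnorm
  have intCS : Integrable (fun x => ((Splus μ η (K:ℝ) x).card : ℝ)) μ := by
    have h1 : (fun x => ((Splus μ η (K:ℝ) x).card : ℝ))
        = fun x => ∑ _k ∈ Splus μ η (K:ℝ) x, (1:ℝ) := by
      funext x; simp
    rw [h1]
    exact integrable_sum_mem μ _ hSplus_meas (fun _ _ => 1)
      (fun k => measurable_const) (fun x k => by simp)
  have intCT : Integrable (fun x => ((T x).card : ℝ)) μ := by
    have h1 : (fun x => ((T x).card : ℝ)) = fun x => ∑ _k ∈ T x, (1:ℝ) := by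
      funext x; simp
    rw [h1]
    exact integrable_sum_mem μ _ hT_meas (fun _ _ => 1)
      (fun k => measurable_const) (fun x k => by simp)
  -- the pointwise identity
  have key : ∀ x, (∑ k : Fin C,
        if (k : ℕ) < K then max (lam - ηs x k) 0 else max (ηs x k - lam) 0)
      = ((∑ k ∈ Splus μ η (K:ℝ) x ∪ T x, η x k) - ∑ k ∈ StopK x, η x k)
        + lam * ((K:ℝ) - ((Splus μ η (K:ℝ) x).card : ℝ) - ((T x).card : ℝ)) := by
    intro x
    obtain ⟨σ, hσ1, hσ2⟩ := hηs x
    set B : Finset (Fin C) := Finset.univ.filter (fun j : Fin C => (j:ℕ) < K) with hB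
    have hBcard : B.card = K := card_filter_lt_fin hKC.le
    -- disjointness
    have hdisj : Disjoint (Splus μ η (K:ℝ) x) (T x) := by
      rw [Finset.disjoint_left]
      intro k hk hkT
      have h1 : lam < η x k := (hSplus_mem x k).mp hk
      have h2 : η x k = lam := hT_tie x k hkT
      linarith
    have hsumT : ∑ k ∈ T x, η x k = ((T x).card : ℝ) * lam := by
      rw [Finset.sum_congr rfl (fun k hk => hT_tie x k hk), Finset.sum_const,
        nsmul_eq_mul]
    have hsumU : ∑ k ∈ Splus μ η (K:ℝ) x ∪ T x, η x k
        = (∑ k ∈ Splus μ η (K:ℝ) x, η x k) + ((T x).card : ℝ) * lam := by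
      rw [Finset.sum_union hdisj, hsumT]
    -- top-K sum equals sum over first K sorted values
    have htop : ∑ k ∈ StopK x, η x k = ∑ j ∈ B, ηs x j := by
      have hmem : ∀ j : Fin C, j ∈ (StopK x).map σ.symm.toEmbedding ↔ σ j ∈ StopK x := by
        intro j
        rw [Finset.mem_map_equiv]
        simp
      have hsm : ∑ j ∈ (StopK x).map σ.symm.toEmbedding, ηs x j
          = ∑ k ∈ StopK x, η x k := by
        rw [Finset.sum_map]
        refine Finset.sum_congr rfl fun k _ => ?_
        simp [hσ1]
      rw [← hsm]
      refine sum_eq_of_card_eq (ηs x) _ B ?_ ?_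
      · rw [Finset.card_map, hS_card, hBcard]
      · intro i hi hiB j hjB hjA
        rw [hmem] at hi hjA
        have h1 : ηs x j ≤ ηs x i := by
          rw [hσ1, hσ1]; exact hS_top x (σ i) hi (σ j) hjA
        have h2 : ηs x i ≤ ηs x j := by
          refine hσ2 j i ?_
          have hjK : (j:ℕ) < K := by simpa [hB] using hjB
          have hiK : ¬ (i:ℕ) < K := by simpa [hB] using hiB
          exact Fin.le_def.mpr (by omega)
        linarith
    -- permutation-invariant sums
    have hsum1 : ∑ k, ηs x k = 1 := by
      simp only [hσ1]
      rw [Equiv.sum_comp σ (η x)]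
      exact hη1 x
    have hmin : ∑ k, min (ηs x k) lam = ∑ k, min (η x k) lam := by
      simp only [hσ1]
      exact Equiv.sum_comp σ (fun k => min (η x k) lam)
    -- value of the min sum
    have hminval : ∑ k, min (η x k) lam
        = 1 - (∑ k ∈ Splus μ η (K:ℝ) x, η x k)
          + lam * ((Splus μ η (K:ℝ) x).card : ℝ) := by
      have e1 : ∀ k : Fin C, min (η x k) lam = η x k - max (η x k - lam) 0 := by
        intro k; rw [min_max_aux2]; ring
      have e2 : ∀ k : Fin C, max (η x k - lam) 0
          = if lam < η x k then η x k - lam else 0 := by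
        intro k
        rcases lt_or_ge lam (η x k) with h | h
        · rw [if_pos h, max_eq_left (by linarith)]
        · rw [if_neg (not_lt.mpr h), max_eq_right (by linarith)]
      have e3 : ∑ k : Fin C, max (η x k - lam) 0
          = ∑ k ∈ Splus μ η (K:ℝ) x, (η x k - lam) := by
        simp only [e2]
        rw [Splus, ← Finset.sum_filter]
      simp only [e1]
      rw [Finset.sum_sub_distrib, hη1 x, e3, Finset.sum_sub_distrib,
        Finset.sum_const, nsmul_eq_mul]
      ring
    -- decompose the main sum
    have hFsum : (∑ k : Fin C,
          if (k : ℕ) < K then max (lam - ηs x k) 0 else max (ηs x k - lam) 0)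
        = (∑ k : Fin C, if (k:ℕ) < K then lam else ηs x k)
          - ∑ k, min (ηs x k) lam := by
      rw [← Finset.sum_sub_distrib]
      refine Finset.sum_congr rfl fun k _ => ?_
      split_ifs with h
      · rw [min_max_aux1]
      · rw [min_max_aux2]
    have hIf : (∑ k : Fin C, if (k:ℕ) < K then lam else ηs x k)
        = (K:ℝ) * lam + (1 - ∑ j ∈ B, ηs x j) := by
      rw [Finset.sum_ite, Finset.sum_const, nsmul_eq_mul]
      have hcompl : ∑ j ∈ Finset.univ.filter (fun j : Fin C => ¬ (j:ℕ) < K), ηs x j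
          = (∑ k, ηs x k) - ∑ j ∈ B, ηs x j := by
        have := Finset.sum_filter_add_sum_filter_not Finset.univ
          (fun j : Fin C => (j:ℕ) < K) (ηs x)
        rw [← hB] at this
        linarith
      rw [hcompl, hsum1, hBcard]
    have hexp : lam * ((K:ℝ) - ((Splus μ η (K:ℝ) x).card : ℝ) - ((T x).card : ℝ))
        = (K:ℝ) * lam - lam * ((Splus μ η (K:ℝ) x).card : ℝ)
          - ((T x).card : ℝ) * lam := by ring
    rw [hFsum, hIf, hsumU, hexp, hmin, hminval, htop]
    ring
  -- integral assembly
  have intD : Integrable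
      (fun x => (∑ k ∈ Splus μ η (K:ℝ) x ∪ T x, η x k) - ∑ k ∈ StopK x, η x k) μ :=
    intU.sub intA
  have intg : Integrable
      (fun x => (K:ℝ) - ((Splus μ η (K:ℝ) x).card : ℝ) - ((T x).card : ℝ)) μ :=
    ((integrable_const _).sub intCS).sub intCT
  have hg0 : ∫ x, ((K:ℝ) - ((Splus μ η (K:ℝ) x).card : ℝ) - ((T x).card : ℝ)) ∂μ = 0 := by
    have e1 : ∫ x, ((K:ℝ) - ((Splus μ η (K:ℝ) x).card : ℝ) - ((T x).card : ℝ)) ∂μ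
        = (∫ x, ((K:ℝ) - ((Splus μ η (K:ℝ) x).card : ℝ)) ∂μ) - ∫ x, ((T x).card : ℝ) ∂μ :=
      integral_sub ((integrable_const _).sub intCS) intCT
    have e2 : ∫ x, ((K:ℝ) - ((Splus μ η (K:ℝ) x).card : ℝ)) ∂μ
        = (∫ _x, (K:ℝ) ∂μ) - ∫ x, ((Splus μ η (K:ℝ) x).card : ℝ) ∂μ :=
      integral_sub (integrable_const _) intCS
    rw [e1, e2, integral_const]
    have h1 : avgSize μ T = ∫ x, ((T x).card : ℝ) ∂μ := rfl
    have h2 : avgSize μ (Splus μ η (K:ℝ)) = ∫ x, ((Splus μ η (K:ℝ) x).card : ℝ) ∂μ := rfl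
    rw [h1, h2] at hT_size
    simp [hT_size]
  have int1A : Integrable (fun x => 1 - ∑ k ∈ StopK x, η x k) μ :=
    (integrable_const 1).sub intA
  have int1U : Integrable (fun x => 1 - ∑ k ∈ Splus μ η (K:ℝ) x ∪ T x, η x k) μ :=
    (integrable_const 1).sub intU
  simp only [errRate]
  calc (∫ x, (1 - ∑ k ∈ StopK x, η x k) ∂μ)
        - ∫ x, (1 - ∑ k ∈ Splus μ η (K:ℝ) x ∪ T x, η x k) ∂μ
      = ∫ x, ((1 - ∑ k ∈ StopK x, η x k)
          - (1 - ∑ k ∈ Splus μ η (K:ℝ) x ∪ T x, η x k)) ∂μ :=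
        (integral_sub int1A int1U).symm
    _ = ∫ x, ((∑ k ∈ Splus μ η (K:ℝ) x ∪ T x, η x k) - ∑ k ∈ StopK x, η x k) ∂μ := by
        congr 1; funext x; ring
    _ = (∫ x, ((∑ k ∈ Splus μ η (K:ℝ) x ∪ T x, η x k) - ∑ k ∈ StopK x, η x k) ∂μ)
        + lam * ∫ x, ((K:ℝ) - ((Splus μ η (K:ℝ) x).card : ℝ) - ((T x).card : ℝ)) ∂μ := by
        rw [hg0]; ring
    _ = (∫ x, ((∑ k ∈ Splus μ η (K:ℝ) x ∪ T x, η x k) - ∑ k ∈ StopK x, η x k) ∂μ)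
        + ∫ x, lam * ((K:ℝ) - ((Splus μ η (K:ℝ) x).card : ℝ) - ((T x).card : ℝ)) ∂μ := by
        rw [integral_const_mul]
    _ = ∫ x, (((∑ k ∈ Splus μ η (K:ℝ) x ∪ T x, η x k) - ∑ k ∈ StopK x, η x k)
        + lam * ((K:ℝ) - ((Splus μ η (K:ℝ) x).card : ℝ) - ((T x).card : ℝ))) ∂μ :=
        (integral_add intD (intg.const_mul lam)).symm
    _ = ∫ x, (∑ k : Fin C,
          if (k : ℕ) < K then max (lam - ηs x k) 0 else max (ηs x k - lam) 0) ∂μ := by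
        congr 1; funext x; rw [key x]
end
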